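/- arXiv:2407.04838 — 6 statements merged into one kernel-verified Lean document; each statement's English description precedes it below -/
import Mathlib

section
/- Let a group G act by isometries on a metric space Y such that the action is AU-acylindrical and some G-orbit in Y is unbounded. Then every commensurated subgroup H ≤ G all of whose orbits in Y are bounded is finite. -/
open Set Metric

/-- The two-point `ε`-coarse stabilizer `set_ε(x) ∩ set_ε(y)` of an isometric action. -/
def coarseStab2 (G : Type*) {Y : Type*} [Group G] [PseudoMetricSpace Y] [MulAction G Y]
    (ε : ℝ) (x y : Y) : Set G :=
  {g : G | dist (g • x) x ≤ ε ∧ dist (g • y) y ≤ ε}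

/-- An action is *AU-acylindrical* if for every `ε > 0` there is `R ≥ 0` such that
whenever `dist x y ≥ R` the two-point `ε`-coarse stabilizer is finite. -/
def IsAUAcylindricalAction (G Y : Type*) [Group G] [PseudoMetricSpace Y] [MulAction G Y] : Prop :=
  ∀ ε : ℝ, 0 < ε → ∃ R : ℝ, 0 ≤ R ∧ ∀ x y : Y, R ≤ dist x y → (coarseStab2 G ε x y).Finite

/-- `H` is commensurated in `G`: for every `g`, `H ∩ gHg⁻¹` has finite index in both `H`
and `gHg⁻¹`. -/
def IsCommensuratedSubgroup {G : Type*} [Group G] (H : Subgroup G) : Prop :=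
  ∀ g : G, (Subgroup.map (MulAut.conj g).toMonoidHom H).relIndex H ≠ 0 ∧
    H.relIndex (Subgroup.map (MulAut.conj g).toMonoidHom H) ≠ 0

/-!
Take a point `x` with unbounded `G`-orbit. Since the `H`-orbit of `x` is bounded, `H` moves `x`
by at most some `ε`; choose `g ∈ G` moving `x` further than the acylindricity constant `R(ε)`.
Every element of `H ∩ gHg⁻¹` moves both `x` and `g • x` by at most `ε`, so this intersection is
finite, and it has finite index in `H` by commensuration. Hence `H` is finite.
-/

theorem Subgroup.finite_of_finite_of_index_ne_zero {G : Type*} [Group G] (K : Subgroup G)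
    [Finite K] (hK : K.index ≠ 0) : Finite G := by
  apply Nat.finite_of_card_ne_zero
  rw [← K.card_mul_index]
  exact mul_ne_zero Nat.card_pos.ne' hK

theorem Subgroup.finite_of_relIndex_ne_zero {G : Type*} [Group G] {K H : Subgroup G}
    (hfin : ((K ⊓ H : Subgroup G) : Set G).Finite) (hK : K.relIndex H ≠ 0) : Finite H := by
  rw [Subgroup.relIndex, ← Subgroup.inf_subgroupOf_right] at hK
  have : Finite (K ⊓ H : Subgroup G) := hfin.to_subtype
  have : Finite ((K ⊓ H).subgroupOf H) :=
    .of_equiv _ (Subgroup.subgroupOfEquivOfLe inf_le_right).symm.toEquiv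
  exact ((K ⊓ H).subgroupOf H).finite_of_finite_of_index_ne_zero hK

section Action

variable {G Y : Type*} [Group G] [PseudoMetricSpace Y] [MulAction G Y]

theorem exists_lt_dist_smul_of_not_isBounded_orbit {x : Y}
    (hx : ¬ Bornology.IsBounded (MulAction.orbit G x)) (R : ℝ) :
    ∃ g : G, R < dist (g • x) x := by
  by_contra! h
  refine hx ((isBounded_closedBall (x := x) (r := R)).subset ?_)
  rintro _ ⟨g, rfl⟩
  exact mem_closedBall.2 (h g)

theorem exists_pos_forall_dist_smul_le {H : Set G} {x : Y}
    (hH : Bornology.IsBounded ((fun g : G => g • x) '' H)) :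
    ∃ ε > 0, ∀ h ∈ H, dist (h • x) x ≤ ε := by
  obtain ⟨r, hr⟩ := (isBounded_iff_subset_closedBall x).1 hH
  refine ⟨max r 1, by positivity, fun h hh => ?_⟩
  exact (mem_closedBall.1 (hr ⟨h, hh, rfl⟩)).trans (le_max_left r 1)

theorem inf_map_conj_subset_coarseStab2
    (hiso : ∀ (g : G) (x y : Y), dist (g • x) (g • y) = dist x y)
    {H : Subgroup G} {ε : ℝ} {x : Y} (hH : ∀ h ∈ H, dist (h • x) x ≤ ε) (g : G) :
    ((H.map (MulAut.conj g).toMonoidHom ⊓ H : Subgroup G) : Set G) ⊆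
      coarseStab2 G ε x (g • x) := by
  rintro _ ⟨⟨h, hh, rfl⟩, hconj⟩
  refine ⟨hH _ hconj, ?_⟩
  have : (MulAut.conj g).toMonoidHom h • g • x = g • h • x := by
    simp [MulAut.conj_apply, mul_smul]
  rw [this, hiso]
  exact hH h hh

end Action

/-- If `G` acts AU-acylindrically by isometries on a metric space with some
unbounded orbit, then every commensurated subgroup all of whose orbits are bounded is finite. -/
theorem commensurated_bounded_orbits_finite
    (G Y : Type*) [Group G] [MetricSpace Y] [MulAction G Y]
    (hiso : ∀ (g : G) (x y : Y), dist (g • x) (g • y) = dist x y)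
    (hAU : IsAUAcylindricalAction G Y)
    (hunb : ∃ x : Y, ¬ Bornology.IsBounded (MulAction.orbit G x))
    (H : Subgroup G) (hcomm : IsCommensuratedSubgroup H)
    (hbdd : ∀ x : Y, Bornology.IsBounded ((fun g : G => g • x) '' (H : Set G))) :
    Finite H := by
  obtain ⟨x, hx⟩ := hunb
  obtain ⟨ε, hε, hHε⟩ := exists_pos_forall_dist_smul_le (hbdd x)
  obtain ⟨R, -, hR⟩ := hAU ε hε
  obtain ⟨g, hg⟩ := exists_lt_dist_smul_of_not_isBounded_orbit hx R
  have hfin := (hR x (g • x) (dist_comm x (g • x) ▸ hg.le)).subset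
    (inf_map_conj_subset_coarseStab2 hiso hHε g)
  exact Subgroup.finite_of_relIndex_ne_zero hfin (hcomm g).1
end

section
/- Let D ≥ 1 and δ ≥ 0, let X₁, …, X_D be geodesic metric spaces each of which is δ-hyperbolic, and let Γ be a group acting by isometries on each Xᵢ; equip the product 𝕏 = X₁ × ⋯ × X_D with the supremum metric and let Γ act diagonally. If the action of Γ on 𝕏 is acylindrical, then for every g ∈ Γ either the orbit {gⁿ·x : n ∈ ℤ} is bounded in 𝕏 for every x ∈ 𝕏, or there exists an index i such that g acts on Xᵢ as a loxodromic isometry. (In other words, no element is parabolic or pseudo-parabolic: every element is elliptic or has a loxodromic factor.) -/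
open Set Metric

/-- An action is *acylindrical* if for every `ε > 0` there are `R, N ≥ 0` such that
whenever `dist x y ≥ R` the two-point `ε`-coarse stabilizer has at most `N` elements. -/
def IsAcylindricalAction (G Y : Type*) [Group G] [PseudoMetricSpace Y] [MulAction G Y] : Prop :=
  ∀ ε : ℝ, 0 < ε → ∃ (R : ℝ) (N : ℕ), 0 ≤ R ∧ ∀ x y : Y, R ≤ dist x y →
    (coarseStab2 G ε x y).Finite ∧ (coarseStab2 G ε x y).ncard ≤ N

/-- The Gromov product `⟨x,y⟩_o = (d(x,o) + d(y,o) − d(x,y))/2`. -/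
noncomputable def gromovProd {X : Type*} [PseudoMetricSpace X] (o x y : X) : ℝ :=
  (dist x o + dist y o - dist x y) / 2

/-- `α` is a unit-speed geodesic from `x` to `y`, parametrized on `[0, dist x y]`. -/
def IsGeodesicSeg {X : Type*} [PseudoMetricSpace X] (x y : X) (α : ℝ → X) : Prop :=
  α 0 = x ∧ α (dist x y) = y ∧
    ∀ s ∈ Set.Icc (0 : ℝ) (dist x y), ∀ t ∈ Set.Icc (0 : ℝ) (dist x y),
      dist (α s) (α t) = |s - t|

/-- A metric space is geodesic if any two points are joined by a unit-speed geodesic. -/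
def IsGeodesicSpace (X : Type*) [PseudoMetricSpace X] : Prop :=
  ∀ x y : X, ∃ α : ℝ → X, IsGeodesicSeg x y α

/-- `X` is `δ`-hyperbolic: for all `a b c`, geodesics `α` from `a` to `b` and `γ` from `a`
to `c` satisfy `dist (α t) (γ t) ≤ δ` for `t ∈ [0, ⟨b,c⟩_a]`. -/
def IsDeltaHyperbolic (X : Type*) [PseudoMetricSpace X] (δ : ℝ) : Prop :=
  ∀ a b c : X, ∀ α γ : ℝ → X, IsGeodesicSeg a b α → IsGeodesicSeg a c γ →
    ∀ t ∈ Set.Icc (0 : ℝ) (gromovProd a b c), dist (α t) (γ t) ≤ δ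

/-- `g` acts as a loxodromic isometry on `X`: some orbit map `n ↦ gⁿ • x₀` on `ℤ` is a
quasi-isometric embedding. -/
def IsLoxodromicOn (X : Type*) {G : Type*} [Group G] [PseudoMetricSpace X] [MulAction G X]
    (g : G) : Prop :=
  ∃ x₀ : X, ∃ C lam : ℝ, 1 ≤ C ∧ 0 ≤ lam ∧ ∀ m n : ℤ,
    |(m : ℝ) - (n : ℝ)| / C - lam ≤ dist ((g ^ m) • x₀) ((g ^ n) • x₀) ∧
      dist ((g ^ m) • x₀) ((g ^ n) • x₀) ≤ C * |(m : ℝ) - (n : ℝ)| + lam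

/-- Two loxodromics are *independent* if for some basepoint the Gromov products of all four
sign combinations of their positive powers are uniformly bounded. -/
def IndependentLox (X : Type*) {G : Type*} [Group G] [PseudoMetricSpace X] [MulAction G X]
    (g h : G) : Prop :=
  ∃ x₀ : X, ∃ B : ℝ, ∀ e e' : ℤ, (e = 1 ∨ e = -1) → (e' = 1 ∨ e' = -1) →
    ∀ m n : ℕ, 1 ≤ m → 1 ≤ n →
      gromovProd x₀ ((g ^ (e * (m : ℤ))) • x₀) ((h ^ (e' * (n : ℤ))) • x₀) ≤ B

/-- The elements of the set `S ⊆ G` act on `X` as a general type action: `S` contains two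
independent loxodromics. -/
def IsGeneralTypeOn (X : Type*) {G : Type*} [Group G] [PseudoMetricSpace X] [MulAction G X]
    (S : Set G) : Prop :=
  ∃ g ∈ S, ∃ h ∈ S, IsLoxodromicOn X g ∧ IsLoxodromicOn X h ∧ IndependentLox X g h

/-- The action of `G` on `X` is of general type. -/
def IsGeneralTypeAction (G X : Type*) [Group G] [PseudoMetricSpace X] [MulAction G X] : Prop :=
  IsGeneralTypeOn X (Set.univ : Set G)

namespace St3

variable {Y : Type*} [MetricSpace Y] {δ : ℝ}

lemma gp_nonneg (o a b : Y) : 0 ≤ gromovProd o a b := by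
  have h := dist_triangle a o b
  rw [dist_comm o b] at h
  unfold gromovProd; linarith

lemma gp_le_left (o a b : Y) : gromovProd o a b ≤ dist a o := by
  have h := dist_triangle b a o
  rw [dist_comm b a] at h
  unfold gromovProd; linarith

lemma gp_le_right (o a b : Y) : gromovProd o a b ≤ dist b o := by
  have h := dist_triangle a b o
  unfold gromovProd; linarith

lemma gp_symm (o a b : Y) : gromovProd o a b = gromovProd o b a := by
  unfold gromovProd; rw [dist_comm a b]; ring

lemma geo_dist {x y : Y} {α : ℝ → Y} (h : IsGeodesicSeg x y α) {s t : ℝ}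
    (hs0 : 0 ≤ s) (hs1 : s ≤ dist x y) (ht0 : 0 ≤ t) (ht1 : t ≤ dist x y) :
    dist (α s) (α t) = |s - t| := h.2.2 s ⟨hs0, hs1⟩ t ⟨ht0, ht1⟩

lemma geo_rev {x y : Y} {α : ℝ → Y} (h : IsGeodesicSeg x y α) :
    IsGeodesicSeg y x (fun s => α (dist x y - s)) := by
  refine ⟨by simpa using h.2.1, ?_, ?_⟩
  · rw [dist_comm y x]; simpa using h.1
  · intro s hs t ht
    rw [dist_comm y x] at hs ht
    have e1 : dist (α (dist x y - s)) (α (dist x y - t)) = |dist x y - s - (dist x y - t)| :=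
      geo_dist h (by linarith [hs.2]) (by linarith [hs.1]) (by linarith [ht.2]) (by linarith [ht.1])
    have e2 : dist x y - s - (dist x y - t) = t - s := by ring
    rw [e1, e2, abs_sub_comm]

variable {G : Type*} [Group G] [MulAction G Y]

lemma geo_smul (hiso : ∀ (γ : G) (a b : Y), dist (γ • a) (γ • b) = dist a b)
    (γ : G) {x y : Y} {α : ℝ → Y} (h : IsGeodesicSeg x y α) :
    IsGeodesicSeg (γ • x) (γ • y) (fun s => γ • α s) := by
  have hd : dist (γ • x) (γ • y) = dist x y := hiso γ x y
  refine ⟨by simp only []; rw [h.1], by simp only []; rw [hd, h.2.1], ?_⟩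
  intro s hs t ht
  simp only []
  rw [hd] at hs ht
  rw [hiso]
  exact h.2.2 s hs t ht

lemma fourpt (hδ : 0 ≤ δ) (hgeo : IsGeodesicSpace Y) (hhyp : IsDeltaHyperbolic Y δ)
    (o a b c : Y) :
    min (gromovProd o a b) (gromovProd o b c) - δ ≤ gromovProd o a c := by
  obtain ⟨α, hα⟩ := hgeo o a
  obtain ⟨β, hβ⟩ := hgeo o b
  obtain ⟨γ, hγ⟩ := hgeo o c
  set t := min (gromovProd o a b) (gromovProd o b c) with ht
  have ht0 : 0 ≤ t := le_min (gp_nonneg _ _ _) (gp_nonneg _ _ _)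
  have h1 : dist (α t) (β t) ≤ δ := hhyp o a b α β hα hβ t ⟨ht0, min_le_left _ _⟩
  have h2 : dist (β t) (γ t) ≤ δ := hhyp o b c β γ hβ hγ t ⟨ht0, min_le_right _ _⟩
  have hta : t ≤ dist o a := by
    have := gp_le_left o a b; rw [dist_comm] at this
    exact le_trans (min_le_left _ _) this
  have htc : t ≤ dist o c := by
    have := gp_le_right o b c; rw [dist_comm] at this
    exact le_trans (min_le_right _ _) this
  have hda : dist (α t) a = dist o a - t := by
    have := geo_dist hα ht0 hta dist_nonneg (le_refl (dist o a))
    rw [hα.2.1] at this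
    rw [this, abs_of_nonpos (by linarith)]; ring
  have hdc : dist (γ t) c = dist o c - t := by
    have := geo_dist hγ ht0 htc dist_nonneg (le_refl (dist o c))
    rw [hγ.2.1] at this
    rw [this, abs_of_nonpos (by linarith)]; ring
  have hchain : dist a c ≤ (dist o a - t) + (δ + δ) + (dist o c - t) := by
    calc dist a c ≤ dist a (α t) + dist (α t) c := dist_triangle _ _ _
      _ ≤ dist a (α t) + (dist (α t) (γ t) + dist (γ t) c) :=
          add_le_add_right (dist_triangle _ _ _) _
      _ ≤ (dist o a - t) + (δ + δ) + (dist o c - t) := by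
          rw [dist_comm a (α t), hda, hdc]
          have h3 : dist (α t) (γ t) ≤ δ + δ := by
            calc dist (α t) (γ t) ≤ dist (α t) (β t) + dist (β t) (γ t) := dist_triangle _ _ _
              _ ≤ δ + δ := add_le_add h1 h2
          linarith
  unfold gromovProd
  rw [dist_comm a o, dist_comm c o]
  linarith

lemma side_mid (hgeo : IsGeodesicSpace Y) (hhyp : IsDeltaHyperbolic Y δ)
    {y y' : Y} {α : ℝ → Y} (hα : IsGeodesicSeg y y' α) (s : Y) :
    dist (α (dist y y' / 2)) s ≤ max (dist y s) (dist y' s) - dist y y' / 2 + δ := by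
  set L := dist y y' with hL
  have hL0 : 0 ≤ L := dist_nonneg
  by_cases hcase : L / 2 ≤ gromovProd y y' s
  · obtain ⟨η, hη⟩ := hgeo y s
    have h1 : dist (α (L/2)) (η (L/2)) ≤ δ := hhyp y y' s α η hα hη _ ⟨by linarith, hcase⟩
    have hle : L/2 ≤ dist y s := le_trans hcase (by
      have := gp_le_right y y' s; rwa [dist_comm] at this)
    have h2 : dist (η (L/2)) s = dist y s - L/2 := by
      have := geo_dist hη (by linarith) hle dist_nonneg (le_refl (dist y s))
      rw [hη.2.1] at this
      rw [this, abs_of_nonpos (by linarith)]; ring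
    calc dist (α (L/2)) s ≤ dist (α (L/2)) (η (L/2)) + dist (η (L/2)) s := dist_triangle _ _ _
      _ ≤ δ + (dist y s - L/2) := by rw [h2]; linarith
      _ ≤ max (dist y s) (dist y' s) - L/2 + δ := by
          have := le_max_left (dist y s) (dist y' s); linarith
  · have hid : gromovProd y y' s + gromovProd y' y s = L := by
      unfold gromovProd
      rw [dist_comm y' y, dist_comm s y', dist_comm s y]
      ring
    have hcase' : L/2 ≤ gromovProd y' y s := by
      push_neg at hcase; linarith
    obtain ⟨η, hη⟩ := hgeo y' s
    have hrev := geo_rev hα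
    have h1 : dist (α (L - L/2)) (η (L/2)) ≤ δ := by
      have := hhyp y' y s _ η hrev hη (L/2) ⟨by linarith, hcase'⟩
      simpa using this
    have heq : L - L/2 = L/2 := by ring
    rw [heq] at h1
    have hle : L/2 ≤ dist y' s := le_trans hcase' (by
      have := gp_le_right y' y s; rwa [dist_comm] at this)
    have h2 : dist (η (L/2)) s = dist y' s - L/2 := by
      have := geo_dist hη (by linarith) hle dist_nonneg (le_refl (dist y' s))
      rw [hη.2.1] at this
      rw [this, abs_of_nonpos (by linarith)]; ring
    calc dist (α (L/2)) s ≤ dist (α (L/2)) (η (L/2)) + dist (η (L/2)) s := dist_triangle _ _ _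
      _ ≤ δ + (dist y' s - L/2) := by rw [h2]; linarith
      _ ≤ max (dist y s) (dist y' s) - L/2 + δ := by
          have := le_max_right (dist y s) (dist y' s); linarith

lemma deep (hgeo : IsGeodesicSpace Y) (hhyp : IsDeltaHyperbolic Y δ)
    (hiso : ∀ (γ : G) (a b : Y), dist (γ • a) (γ • b) = dist a b)
    (g : G) (x : Y) (M j : ℕ) {α : ℝ → Y}
    (hα : IsGeodesicSeg x ((g ^ M) • x) α) (F t : ℝ)
    (hF : |dist ((g ^ (M + j)) • x) x - dist x ((g ^ M) • x)| ≤ F)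
    (h1 : dist ((g ^ j) • x) x + F ≤ t)
    (h2 : t ≤ dist x ((g ^ M) • x) - (dist ((g ^ j) • x) x + F)) :
    dist ((g ^ j) • α t) (α t) ≤ 2 * δ + F := by
  set L := dist x ((g ^ M) • x) with hLdef
  set fj := dist ((g ^ j) • x) x with hfjdef
  set fMj := dist ((g ^ (M + j)) • x) x with hfMjdef
  have hfj0 : 0 ≤ fj := dist_nonneg
  have hF0 : 0 ≤ F := le_trans (abs_nonneg _) hF
  have hFa : L - fMj ≤ F := by
    have := neg_abs_le (fMj - L); have h' := hF; rw [abs_sub_comm] at h'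
    have := le_trans (neg_abs_le _) (le_refl (|L - fMj|))
    have h'' : |L - fMj| ≤ F := by rwa [abs_sub_comm] at hF
    linarith [le_abs_self (L - fMj)]
  have hFb : fMj - L ≤ F := le_trans (le_abs_self _) hF
  have ht0 : 0 ≤ t := by linarith
  have htL : t ≤ L := by linarith
  have hcomp : (g ^ j) • ((g ^ M) • x) = (g ^ (M + j)) • x := by
    rw [smul_smul, ← pow_add, add_comm]
  have hcomp2 : (g ^ M) • ((g ^ j) • x) = (g ^ (M + j)) • x := by
    rw [smul_smul, ← pow_add]
  have hαj : IsGeodesicSeg ((g ^ j) • x) ((g ^ (M + j)) • x) (fun s => (g ^ j) • α s) := by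
    have := geo_smul hiso (g ^ j) hα
    rwa [hcomp] at this
  have hLj : dist ((g ^ j) • x) ((g ^ (M + j)) • x) = L := by
    rw [← hcomp, hiso]
  obtain ⟨β, hβ⟩ := hgeo ((g ^ (M + j)) • x) x
  -- Step 1
  have hrev := geo_rev hαj
  have hP : gromovProd ((g ^ (M + j)) • x) ((g ^ j) • x) x = (L + fMj - fj) / 2 := by
    unfold gromovProd
    rw [hLj, dist_comm x ((g ^ (M + j)) • x)]
  have hu : L - t ∈ Set.Icc (0:ℝ) (gromovProd ((g ^ (M + j)) • x) ((g ^ j) • x) x) := by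
    rw [hP]
    constructor
    · linarith
    · linarith
  have step1 := hhyp ((g ^ (M + j)) • x) ((g ^ j) • x) x _ β hrev hβ (L - t) hu
  simp only [hLj] at step1
  have he1 : L - (L - t) = t := by ring
  rw [he1] at step1
  -- step1 : dist ((g ^ j) • α t) (β (L - t)) ≤ δ
  -- Step 2
  have hrevβ := geo_rev hβ
  have hdβ : dist ((g ^ (M + j)) • x) x = fMj := rfl
  have hP2 : gromovProd x ((g ^ M) • x) ((g ^ (M + j)) • x) = (L + fMj - fj) / 2 := by
    unfold gromovProd
    have hd : dist ((g ^ M) • x) ((g ^ (M + j)) • x) = fj := by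
      rw [← hcomp2, hiso, dist_comm]
    rw [hd, dist_comm ((g ^ M) • x) x]
  set s2 := t - (L - fMj) with hs2def
  have hs2mem : s2 ∈ Set.Icc (0:ℝ) (gromovProd x ((g ^ M) • x) ((g ^ (M + j)) • x)) := by
    rw [hP2]
    constructor
    · linarith
    · linarith
  have step2 := hhyp x ((g ^ M) • x) ((g ^ (M + j)) • x) α _ hα hrevβ s2 hs2mem
  simp only [hdβ] at step2
  have he2 : fMj - s2 = L - t := by rw [hs2def]; ring
  rw [he2] at step2
  -- step2 : dist (α s2) (β (L - t)) ≤ δ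
  have hs20 : 0 ≤ s2 := by rw [hs2def]; linarith
  have hs2L : s2 ≤ L := by rw [hs2def]; linarith
  have step3 : dist (α s2) (α t) = |s2 - t| := geo_dist hα hs20 hs2L ht0 htL
  have habs : |s2 - t| ≤ F := by
    have : s2 - t = fMj - L := by rw [hs2def]; ring
    rw [this, abs_sub_comm]
    rwa [abs_sub_comm] at hF
  calc dist ((g ^ j) • α t) (α t)
      ≤ dist ((g ^ j) • α t) (β (L - t)) + dist (β (L - t)) (α t) := dist_triangle _ _ _
    _ ≤ δ + (dist (β (L - t)) (α s2) + dist (α s2) (α t)) := by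
        have := dist_triangle (β (L - t)) (α s2) (α t)
        linarith
    _ ≤ δ + (δ + F) := by
        rw [dist_comm (β (L - t)) (α s2)]
        rw [step3] at *
        linarith
    _ = 2 * δ + F := by ring

lemma chain (hδ : 0 ≤ δ) (hgeo : IsGeodesicSpace Y) (hhyp : IsDeltaHyperbolic Y δ)
    (hiso : ∀ (γ : G) (a b : Y), dist (γ • a) (γ • b) = dist a b)
    (h : G) (x : Y)
    (hbig : dist x (h • x) + 2 * δ < dist x (h • h • x)) :
    ∀ n : ℕ, (n : ℝ) * (dist x (h • h • x) - dist x (h • x) - 2 * δ) ≤ dist x ((h ^ n) • x) := by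
  set L0 := dist x (h • x) with hL0
  set d2 := dist x (h • h • x) with hd2
  have hdL : ∀ n : ℕ, dist ((h ^ n) • x) ((h ^ (n + 1)) • x) = L0 := by
    intro n
    have e : (h ^ (n + 1)) • x = (h ^ n) • (h • x) := by rw [smul_smul, ← pow_succ]
    rw [e, hiso]
  have hdd2 : ∀ n : ℕ, dist ((h ^ n) • x) ((h ^ (n + 2)) • x) = d2 := by
    intro n
    have e : (h ^ (n + 2)) • x = (h ^ n) • (h • h • x) := by
      rw [smul_smul, smul_smul, ← pow_succ, ← pow_succ]
    rw [e, hiso]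
  have key : ∀ n : ℕ, gromovProd ((h ^ n) • x) x ((h ^ (n + 1)) • x) ≤ L0 - d2 / 2 + δ ∧
      (n : ℝ) * (d2 - L0 - 2 * δ) ≤ dist x ((h ^ n) • x) := by
    intro n
    induction n with
    | zero =>
      constructor
      · have e0 : gromovProd ((h ^ 0) • x) x ((h ^ 1) • x) = 0 := by
          unfold gromovProd
          simp [dist_comm]
        have hd2L : d2 ≤ 2 * L0 := by
          calc d2 ≤ dist x (h • x) + dist (h • x) (h • h • x) := dist_triangle _ _ _
            _ = 2 * L0 := by rw [hiso]; ring
        rw [e0]; linarith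
      · simp
    | succ n ih =>
      have c1 : dist ((h ^ (n+1)) • x) ((h ^ n) • x) = dist ((h ^ n) • x) ((h ^ (n+1)) • x) :=
        dist_comm _ _
      have c2 : dist ((h ^ (n+2)) • x) ((h ^ (n+1)) • x) = dist ((h ^ (n+1)) • x) ((h ^ (n+2)) • x) :=
        dist_comm _ _
      have c3 : dist x ((h ^ n) • x) = dist ((h ^ n) • x) x := dist_comm _ _
      have c4 : dist x ((h ^ (n+1)) • x) = dist ((h ^ (n+1)) • x) x := dist_comm _ _
      have hq' : gromovProd ((h ^ (n + 1)) • x) x ((h ^ (n + 2)) • x) ≤ L0 - d2 / 2 + δ := by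
        have h4 := fourpt hδ hgeo hhyp ((h ^ (n + 1)) • x) ((h ^ n) • x) x ((h ^ (n + 2)) • x)
        have hP0 : gromovProd ((h ^ (n + 1)) • x) ((h ^ n) • x) ((h ^ (n + 2)) • x)
            = L0 - d2 / 2 := by
          unfold gromovProd
          linarith [hdL n, hdL (n+1), hdd2 n]
        have hX : gromovProd ((h ^ (n + 1)) • x) ((h ^ n) • x) x
            = L0 - gromovProd ((h ^ n) • x) x ((h ^ (n + 1)) • x) := by
          unfold gromovProd
          linarith [hdL n]
        have hXbig : L0 - d2 / 2 + δ < gromovProd ((h ^ (n + 1)) • x) ((h ^ n) • x) x := by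
          rw [hX]
          linarith [ih.1]
        rcases le_total (gromovProd ((h ^ (n + 1)) • x) ((h ^ n) • x) x)
            (gromovProd ((h ^ (n + 1)) • x) x ((h ^ (n + 2)) • x)) with hc | hc
        · exfalso
          rw [min_eq_left hc, hP0] at h4
          linarith
        · rw [min_eq_right hc, hP0] at h4
          linarith
      refine ⟨hq', ?_⟩
      have hdistid : dist x ((h ^ (n + 1)) • x)
          = dist x ((h ^ n) • x) + L0 - 2 * gromovProd ((h ^ n) • x) x ((h ^ (n + 1)) • x) := by
        unfold gromovProd
        linarith [hdL n]
      push_cast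
      rw [hdistid]
      nlinarith [ih.1, ih.2]
  intro n
  exact (key n).2

lemma doubling (hδ : 0 ≤ δ) (hgeo : IsGeodesicSpace Y) (hhyp : IsDeltaHyperbolic Y δ)
    (hiso : ∀ (γ : G) (a b : Y), dist (γ • a) (γ • b) = dist a b)
    (g : G) (x : Y)
    (hsub : ∀ θ : ℝ, 0 < θ → ∃ k₀ : ℕ, ∀ k ≥ k₀, dist ((g ^ k) • x) x ≤ θ * k)
    (m : ℕ) (hm : 1 ≤ m) :
    dist ((g ^ (2 * m)) • x) x ≤ dist ((g ^ m) • x) x + 2 * δ := by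
  by_contra hcon
  push_neg at hcon
  set σ := (dist ((g ^ (2 * m)) • x) x - dist ((g ^ m) • x) x - 2 * δ) / 2 with hσdef
  have hσ : 0 < σ := by rw [hσdef]; linarith
  have hsq : (g ^ m) • (g ^ m) • x = (g ^ (2 * m)) • x := by
    rw [smul_smul, ← pow_add, two_mul]
  have hbig : dist x ((g ^ m) • x) + 2 * δ < dist x ((g ^ m) • (g ^ m) • x) := by
    rw [hsq, dist_comm x ((g ^ (2*m)) • x), dist_comm x ((g ^ m) • x)]
    linarith
  have hch := chain hδ hgeo hhyp hiso (g ^ m) x hbig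
  obtain ⟨k₀, hk₀⟩ := hsub (σ / m) (by positivity)
  set n := max k₀ 1 with hn
  have hn1 : 1 ≤ n := le_max_right _ _
  have h1 := hch n
  rw [hsq] at h1
  have hpow : ((g ^ m) ^ n) • x = (g ^ (m * n)) • x := by rw [← pow_mul]
  rw [hpow] at h1
  have h2 : dist ((g ^ (m * n)) • x) x ≤ (σ / m) * ((m * n : ℕ) : ℝ) := by
    apply hk₀
    calc k₀ ≤ n := le_max_left _ _
      _ ≤ m * n := Nat.le_mul_of_pos_left n hm
  have hm0 : (0:ℝ) < (m:ℝ) := by exact_mod_cast hm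
  have he : (σ / m) * ((m * n : ℕ) : ℝ) = σ * n := by
    push_cast
    field_simp
  rw [he] at h2
  have hG : dist x ((g ^ (2*m)) • x) - dist x ((g ^ m) • x) - 2 * δ = 2 * σ := by
    rw [hσdef, dist_comm x ((g ^ (2*m)) • x), dist_comm x ((g ^ m) • x)]; ring
  rw [hG] at h1
  rw [dist_comm x ((g ^ (m*n)) • x)] at h1
  have hcast : (1 : ℝ) ≤ (n : ℝ) := by exact_mod_cast hn1
  nlinarith

lemma quasicenter (hδ : 0 ≤ δ) (hgeo : IsGeodesicSpace Y) (hhyp : IsDeltaHyperbolic Y δ)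
    (hiso : ∀ (γ : G) (a b : Y), dist (γ • a) (γ • b) = dist a b)
    (g : G) (x : Y) (B : ℝ)
    (hB : ∀ n : ℤ, dist ((g ^ n) • x) x ≤ B) :
    ∃ z : Y, ∀ j : ℤ, dist ((g ^ j) • z) z ≤ 2 * δ + 1 := by
  set r : Y → ℝ := fun y => sSup (Set.range fun n : ℤ => dist y ((g ^ n) • x)) with hr
  have hbdd : ∀ y : Y, BddAbove (Set.range fun n : ℤ => dist y ((g ^ n) • x)) := by
    intro y
    refine ⟨dist y x + B, ?_⟩
    rintro v ⟨n, rfl⟩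
    calc dist y ((g ^ n) • x) ≤ dist y x + dist x ((g ^ n) • x) := dist_triangle _ _ _
      _ ≤ dist y x + B := by rw [dist_comm x _]; linarith [hB n]
  have hne : ∀ y : Y, (Set.range fun n : ℤ => dist y ((g ^ n) • x)).Nonempty :=
    fun y => ⟨_, ⟨0, rfl⟩⟩
  have hrmem : ∀ (y : Y) (n : ℤ), dist y ((g ^ n) • x) ≤ r y :=
    fun y n => le_csSup (hbdd y) ⟨n, rfl⟩
  have hr0 : ∀ y : Y, 0 ≤ r y := fun y => le_trans dist_nonneg (hrmem y 0)
  have hrg : ∀ (j : ℤ) (y : Y), r ((g ^ j) • y) = r y := by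
    intro j y
    apply le_antisymm
    · apply csSup_le (hne _)
      rintro v ⟨n, rfl⟩
      have e : dist ((g ^ j) • y) ((g ^ n) • x) = dist y ((g ^ (n - j)) • x) := by
        have := hiso (g ^ (-j)) ((g ^ j) • y) ((g ^ n) • x)
        rw [smul_smul, smul_smul, ← zpow_add, ← zpow_add] at this
        rw [neg_add_cancel] at this
        rw [zpow_zero, one_smul] at this
        rw [← this]
        congr 1
        ring_nf
      calc (fun n : ℤ => dist ((g ^ j) • y) ((g ^ n) • x)) n
          = dist y ((g ^ (n - j)) • x) := e
        _ ≤ r y := hrmem y (n - j)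
    · apply csSup_le (hne _)
      rintro v ⟨n, rfl⟩
      have e : dist y ((g ^ n) • x) = dist ((g ^ j) • y) ((g ^ (j + n)) • x) := by
        have := hiso (g ^ j) y ((g ^ n) • x)
        rw [smul_smul, ← zpow_add] at this
        rw [this]
      calc (fun n : ℤ => dist y ((g ^ n) • x)) n
          = dist ((g ^ j) • y) ((g ^ (j + n)) • x) := e
        _ ≤ r ((g ^ j) • y) := hrmem _ (j + n)
  set r₀ := sInf (Set.range r) with hr₀
  have hrne : (Set.range r).Nonempty := ⟨r x, ⟨x, rfl⟩⟩
  have hrbb : BddBelow (Set.range r) := by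
    refine ⟨0, ?_⟩
    rintro v ⟨y, rfl⟩
    exact hr0 y
  obtain ⟨v, ⟨y, rfl⟩, hy⟩ := exists_lt_of_csInf_lt hrne
    (show r₀ < r₀ + 1/2 by linarith)
  refine ⟨y, fun j => ?_⟩
  set y' := (g ^ j) • y with hy'
  obtain ⟨α, hα⟩ := hgeo y y'
  set L := dist y y' with hL
  have hub : ∀ n : ℤ, dist (α (L / 2)) ((g ^ n) • x) ≤ r y - L / 2 + δ := by
    intro n
    have hs := side_mid hgeo hhyp hα ((g ^ n) • x)
    have h1 : dist y ((g ^ n) • x) ≤ r y := hrmem y n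
    have h2 : dist y' ((g ^ n) • x) ≤ r y := by
      rw [hy']
      calc dist ((g ^ j) • y) ((g ^ n) • x) ≤ r ((g ^ j) • y) := hrmem _ n
        _ = r y := hrg j y
    have hmax : max (dist y ((g ^ n) • x)) (dist y' ((g ^ n) • x)) ≤ r y := max_le h1 h2
    linarith
  have hrm : r (α (L / 2)) ≤ r y - L / 2 + δ := by
    apply csSup_le (hne _)
    rintro v ⟨n, rfl⟩
    exact hub n
  have hlow : r₀ ≤ r (α (L / 2)) := csInf_le hrbb ⟨α (L / 2), rfl⟩
  have : L ≤ 2 * δ + 1 := by linarith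
  calc dist ((g ^ j) • y) y = L := by rw [hL, hy', dist_comm]
    _ ≤ 2 * δ + 1 := this

lemma sublinear_of_no_linear (f : ℕ → ℝ) (hnn : ∀ n, 0 ≤ f n)
    (hsub : ∀ m n, f (m + n) ≤ f m + f n)
    (hno : ∀ c : ℝ, 0 < c → ∃ k : ℕ, 1 ≤ k ∧ f k < c * k) :
    ∀ θ : ℝ, 0 < θ → ∃ k₀ : ℕ, ∀ k ≥ k₀, f k ≤ θ * k := by
  intro θ hθ
  have hS : Subadditive f := fun m n => hsub m n
  have hbdd : BddBelow (Set.range fun n : ℕ => f n / n) := by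
    refine ⟨0, ?_⟩
    rintro v ⟨n, rfl⟩
    exact div_nonneg (hnn n) (Nat.cast_nonneg n)
  have hlim : hS.lim < θ := by
    rcases le_or_gt hS.lim 0 with hle | hpos
    · linarith
    · exfalso
      obtain ⟨k, hk1, hk⟩ := hno hS.lim hpos
      have hk0 : k ≠ 0 := by omega
      have := hS.lim_le_div hbdd hk0
      have hkpos : (0:ℝ) < (k:ℝ) := by exact_mod_cast Nat.pos_of_ne_zero hk0
      rw [le_div_iff₀ hkpos] at this
      linarith
  have hev : ∀ᶠ n in Filter.atTop, f n / n < θ :=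
    (hS.tendsto_lim hbdd).eventually_lt_const hlim
  obtain ⟨k₀, hk₀⟩ := Filter.eventually_atTop.mp hev
  refine ⟨max k₀ 1, fun k hk => ?_⟩
  have h1 : f k / k < θ := hk₀ k (le_trans (le_max_left _ _) hk)
  have hk1 : 1 ≤ k := le_trans (le_max_right _ _) hk
  have hkpos : (0:ℝ) < (k:ℝ) := by exact_mod_cast hk1
  rw [div_lt_iff₀ hkpos] at h1
  linarith

lemma logbound (f : ℕ → ℝ) (hδ : 0 ≤ δ) (hf0 : f 0 = 0) (hf1 : 0 ≤ f 1)
    (hstep : ∀ n, f (n + 1) ≤ f n + f 1)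
    (hdbl : ∀ m, 1 ≤ m → f (2 * m) ≤ f m + 2 * δ) :
    ∀ k : ℕ, ∀ m ≤ 2 ^ k, f m ≤ (f 1 + 2 * δ) * (k + 1) := by
  intro k
  induction k with
  | zero =>
    intro m hm
    interval_cases m
    · rw [hf0]; nlinarith
    · push_cast; nlinarith
  | succ k ih =>
    intro m hm
    have hpow : (2:ℕ) ^ (k + 1) = 2 * 2 ^ k := by rw [pow_succ]; ring
    have hexp : ((k:ℝ) + 1 + 1) = (k + 1) + 1 := by push_cast; ring
    rcases Nat.even_or_odd m with ⟨l, hl⟩ | ⟨l, hl⟩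
    · rcases Nat.eq_zero_or_pos l with rfl | hlpos
      · subst hl; rw [hf0]; push_cast; nlinarith
      · have hl2 : l ≤ 2 ^ k := by omega
        have := ih l hl2
        have hd := hdbl l hlpos
        have h2l : 2 * l = m := by omega
        rw [h2l] at hd
        push_cast
        nlinarith
    · rcases Nat.eq_zero_or_pos l with rfl | hlpos
      · have : m = 1 := by omega
        subst this
        push_cast; nlinarith
      · have hl2 : l ≤ 2 ^ k := by omega
        have := ih l hl2
        have hd := hdbl l hlpos
        have hs := hstep (2 * l)
        have h2l : 2 * l + 1 = m := by omega
        rw [h2l] at hs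
        push_cast
        nlinarith

lemma exp_beats (c : ℝ) (D : ℕ) : ∃ k : ℕ, c * ((k : ℝ) + 1) ^ D ≤ 2 ^ k := by
  rcases le_or_gt c 0 with hc | hc
  · refine ⟨0, ?_⟩
    simp only [Nat.cast_zero, zero_add, one_pow, pow_zero, mul_one]
    linarith
  · have hlog : 0 < Real.log 2 := Real.log_pos one_lt_two
    set A := c * (2 / Real.log 2) ^ D + 1 with hA
    have hA0 : 0 < A := by positivity
    have htend := Real.tendsto_exp_div_pow_atTop D
    obtain ⟨x₀, hx₀⟩ := Filter.eventually_atTop.mp (Filter.tendsto_atTop.mp htend A)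
    obtain ⟨k₁, hk₁⟩ := exists_nat_ge (max x₀ 1 / Real.log 2)
    set k := max k₁ 1 with hkdef
    have hk1 : (1:ℝ) ≤ (k:ℝ) := by
      have : (1:ℕ) ≤ k := le_max_right _ _
      exact_mod_cast this
    have hkk : (k₁:ℝ) ≤ (k:ℝ) := by
      have : k₁ ≤ k := le_max_left _ _
      exact_mod_cast this
    have hkl : max x₀ 1 ≤ (k:ℝ) * Real.log 2 := by
      have e : max x₀ 1 = (max x₀ 1 / Real.log 2) * Real.log 2 := by field_simp
      rw [e]
      have := mul_le_mul_of_nonneg_right (le_trans hk₁ hkk) hlog.le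
      linarith
    have hx := hx₀ ((k:ℝ) * Real.log 2) (le_trans (le_max_left _ _) hkl)
    have hkl0 : (0:ℝ) < (k:ℝ) * Real.log 2 := by positivity
    have hexp : Real.exp ((k:ℝ) * Real.log 2) = 2 ^ k := by
      rw [Real.exp_nat_mul, Real.exp_log two_pos]
    have h1 : A * ((k:ℝ) * Real.log 2) ^ D ≤ 2 ^ k := by
      rw [← hexp]
      rw [le_div_iff₀ (by positivity)] at hx
      linarith
    have h2 : c * ((k:ℝ) + 1) ^ D ≤ A * ((k:ℝ) * Real.log 2) ^ D := by
      have e1 : ((k:ℝ) + 1) ^ D ≤ (2 * k) ^ D :=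
        pow_le_pow_left₀ (by linarith) (by linarith) D
      have e2 : A * ((k:ℝ) * Real.log 2) ^ D = A * (Real.log 2) ^ D * (k:ℝ) ^ D := by
        rw [mul_pow]; ring
      have e3 : c * (2 * (k:ℝ)) ^ D = c * 2 ^ D * (k:ℝ) ^ D := by
        rw [mul_pow]; ring
      have e4 : c * 2 ^ D ≤ A * (Real.log 2) ^ D := by
        have e5 : (c * (2 / Real.log 2) ^ D) * (Real.log 2) ^ D = c * 2 ^ D := by
          rw [div_pow]
          field_simp
        have e6 : A * (Real.log 2) ^ D = c * 2 ^ D + (Real.log 2) ^ D := by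
          rw [hA, add_mul, e5, one_mul]
        have : (0:ℝ) < (Real.log 2) ^ D := pow_pos hlog D
        linarith [e6]
      have hkD : (0:ℝ) ≤ (k:ℝ) ^ D := by positivity
      calc c * ((k:ℝ) + 1) ^ D ≤ c * (2 * (k:ℝ)) ^ D :=
            mul_le_mul_of_nonneg_left e1 hc.le
        _ = c * 2 ^ D * (k:ℝ) ^ D := e3
        _ ≤ A * (Real.log 2) ^ D * (k:ℝ) ^ D := mul_le_mul_of_nonneg_right e4 hkD
        _ = A * ((k:ℝ) * Real.log 2) ^ D := e2.symm
    exact ⟨k, le_trans h2 h1⟩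

lemma flat {ι : Type*} [DecidableEq ι] (fs : ι → ℕ → ℝ) (W K Dtot : ℕ) (Φ : ℝ)
    (hΦ0 : 0 ≤ Φ) (b : ℕ) (hb : b = Nat.floor (2 * Φ) + 1)
    (hbase : (K + 1) * b ^ Dtot ≤ W + 1) :
    ∀ s : Finset ι, s.card ≤ Dtot →
      (∀ i ∈ s, (∀ B : ℝ, ∃ n : ℕ, B < fs i n) ∧
        (∀ j ≤ W, fs i j ≤ Φ) ∧ (∀ m n : ℕ, |fs i (m + n) - fs i m| ≤ fs i n)) →
      ∀ H : ℝ, ∃ T : Finset ℕ, T ⊆ Finset.Icc 0 W ∧ 0 ∈ T ∧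
        (K + 1) * b ^ (Dtot - s.card) ≤ T.card ∧
        ∀ i ∈ s, ∃ M : ℕ, H ≤ fs i M ∧
          ∀ j ∈ T, |fs i (M + j) - fs i M| ≤ 2 ^ s.card := by
  intro s
  induction s using Finset.induction_on with
  | empty =>
    intro _ _ H
    refine ⟨Finset.Icc 0 W, Finset.Subset.refl _, by simp, ?_, by simp⟩
    rw [Nat.card_Icc]
    simpa using hbase
  | @insert a s ha ih =>
    intro hcard hprop H
    have hcards : (insert a s).card = s.card + 1 := Finset.card_insert_of_notMem ha
    have hcard' : s.card ≤ Dtot := by omega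
    obtain ⟨T, hTsub, hT0, hTcard, hTflat⟩ :=
      ih hcard' (fun i hi => hprop i (Finset.mem_insert_of_mem hi)) (H + 2 ^ s.card)
    obtain ⟨hu, hΦb, habs⟩ := hprop a (Finset.mem_insert_self a s)
    obtain ⟨M, hM⟩ := hu (H + Φ)
    have hjW : ∀ j ∈ T, j ≤ W := by
      intro j hj
      exact (Finset.mem_Icc.mp (hTsub hj)).2
    set ψ : ℕ → ℕ := fun j => Nat.floor (fs a (M + j) - fs a M + Φ) with hψ
    have hval : ∀ j ∈ T, 0 ≤ fs a (M + j) - fs a M + Φ ∧ fs a (M + j) - fs a M + Φ ≤ 2 * Φ := by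
      intro j hj
      have h1 := habs M j
      have h2 : fs a j ≤ Φ := hΦb j (hjW j hj)
      rw [abs_le] at h1
      constructor <;> linarith [h1.1, h1.2]
    have hbpos : 0 < b := by omega
    have hmaps : ∀ j ∈ T, ψ j ∈ Finset.range b := by
      intro j hj
      have hfl := Nat.floor_le_floor (hval j hj).2
      have hre : ψ j = Nat.floor (fs a (M + j) - fs a M + Φ) := rfl
      rw [Finset.mem_range, hre, hb]
      omega
    set n₂ := (K + 1) * b ^ (Dtot - s.card - 1) with hn₂
    have hDpos : s.card + 1 ≤ Dtot := by omega
    have hbn : (Finset.range b).card * n₂ ≤ T.card := by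
      rw [Finset.card_range]
      have he : Dtot - s.card = (Dtot - s.card - 1) + 1 := by omega
      calc b * n₂ = (K + 1) * b ^ ((Dtot - s.card - 1) + 1) := by
            rw [pow_succ, hn₂]; ring
        _ = (K + 1) * b ^ (Dtot - s.card) := by rw [← he]
        _ ≤ T.card := hTcard
    obtain ⟨y, hy, hfib⟩ :=
      Finset.exists_le_card_fiber_of_mul_le_card_of_maps_to hmaps
        ⟨0, Finset.mem_range.mpr hbpos⟩ hbn
    set S := Finset.filter (fun j => ψ j = y) T with hS
    have hSsub : S ⊆ T := Finset.filter_subset _ _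
    have hn₂pos : 0 < n₂ := Nat.mul_pos (by omega) (pow_pos hbpos _)
    have hSne : S.Nonempty := Finset.card_pos.mp (lt_of_lt_of_le hn₂pos hfib)
    set m₀ := S.min' hSne with hm₀
    have hm₀S : m₀ ∈ S := S.min'_mem hSne
    have hband : ∀ u ∈ S, ∀ v ∈ S, |fs a (M + u) - fs a (M + v)| ≤ 1 := by
      intro u hu' v hv'
      have hu1 := hval u (hSsub hu')
      have hv1 := hval v (hSsub hv')
      have huy : ψ u = y := (Finset.mem_filter.mp hu').2
      have hvy : ψ v = y := (Finset.mem_filter.mp hv').2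
      have h1 := Nat.floor_le hu1.1
      have h2 := Nat.lt_floor_add_one (fs a (M + u) - fs a M + Φ)
      have h3 := Nat.floor_le hv1.1
      have h4 := Nat.lt_floor_add_one (fs a (M + v) - fs a M + Φ)
      rw [show (Nat.floor (fs a (M + u) - fs a M + Φ)) = y from huy] at h1 h2
      rw [show (Nat.floor (fs a (M + v) - fs a M + Φ)) = y from hvy] at h3 h4
      rw [abs_le]
      constructor <;> linarith
    set T' := S.image (fun j => j - m₀) with hT'
    have hminle : ∀ u ∈ S, m₀ ≤ u := fun u hu' => S.min'_le u hu'
    refine ⟨T', ?_, ?_, ?_, ?_⟩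
    · intro v hv
      obtain ⟨u, hu', rfl⟩ := Finset.mem_image.mp hv
      rw [Finset.mem_Icc]
      exact ⟨Nat.zero_le _, le_trans (Nat.sub_le _ _) (hjW u (hSsub hu'))⟩
    · exact Finset.mem_image.mpr ⟨m₀, hm₀S, Nat.sub_self m₀⟩
    · have hinj : Set.InjOn (fun j => j - m₀) S := by
        intro u hu' v hv' huv
        have := hminle u hu'
        have := hminle v hv'
        simp only at huv
        omega
      rw [Finset.card_image_of_injOn hinj, hcards]
      have : Dtot - (s.card + 1) = Dtot - s.card - 1 := by omega
      rw [this]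
      exact le_trans (le_of_eq rfl) hfib
    · intro i hi
      rcases Finset.mem_insert.mp hi with rfl | his
      · -- the new factor
        refine ⟨M + m₀, ?_, ?_⟩
        · have h1 := habs M m₀
          have h2 : fs i m₀ ≤ Φ := hΦb m₀ (hjW m₀ (hSsub hm₀S))
          rw [abs_le] at h1
          linarith [h1.1]
        · intro j hj
          obtain ⟨u, hu', rfl⟩ := Finset.mem_image.mp hj
          have he : M + m₀ + (u - m₀) = M + u := by
            have := hminle u hu'
            omega
          rw [he]
          have hone : (1:ℝ) ≤ 2 ^ (insert i s).card := one_le_pow₀ (by norm_num : (1:ℝ) ≤ 2)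
          exact le_trans (hband u hu' m₀ hm₀S) hone
      · -- old factors
        obtain ⟨Mi, hMi1, hMi2⟩ := hTflat i his
        refine ⟨Mi + m₀, ?_, ?_⟩
        · have := hMi2 m₀ (hSsub hm₀S)
          rw [abs_le] at this
          linarith [this.1]
        · intro j hj
          obtain ⟨u, hu', rfl⟩ := Finset.mem_image.mp hj
          have he : Mi + m₀ + (u - m₀) = Mi + u := by
            have := hminle u hu'
            omega
          rw [he]
          have h1 := hMi2 u (hSsub hu')
          have h2 := hMi2 m₀ (hSsub hm₀S)
          have he2 : ((2:ℝ)) ^ (insert a s).card = 2 ^ s.card + 2 ^ s.card := by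
            rw [hcards, pow_succ]; ring
          rw [he2]
          rw [abs_le] at h1 h2 ⊢
          constructor <;> linarith [h1.1, h1.2, h2.1, h2.2]

end St3

set_option maxHeartbeats 2000000 in
open St3 in
/-- In an acylindrical action on a finite product of geodesic `δ`-hyperbolic
spaces (sup metric, diagonal action), every element is either elliptic or has a loxodromic
factor. -/
theorem elliptic_or_loxodromic_factor
    {D : ℕ} (hD : 1 ≤ D) (δ : ℝ) (hδ : 0 ≤ δ)
    (X : Fin D → Type*) [∀ i, MetricSpace (X i)]
    (Γ : Type*) [Group Γ] [∀ i, MulAction Γ (X i)]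
    (hiso : ∀ (i : Fin D) (g : Γ) (x y : X i), dist (g • x) (g • y) = dist x y)
    (hgeo : ∀ i, IsGeodesicSpace (X i))
    (hhyp : ∀ i, IsDeltaHyperbolic (X i) δ)
    (hacyl : IsAcylindricalAction Γ (∀ i, X i)) :
    ∀ g : Γ,
      (∀ x : ∀ i, X i, Bornology.IsBounded (Set.range fun n : ℤ => (g ^ n) • x)) ∨
        ∃ i : Fin D, IsLoxodromicOn (X i) g := by
  classical
  intro g
  by_cases hne : ∀ i, Nonempty (X i)
  swap
  · left
    intro x
    exact absurd (fun i => ⟨x i⟩) hne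
  haveI : Nonempty (Fin D) := Fin.pos_iff_nonempty.mp hD
  set x₀ : ∀ i, X i := fun i => (hne i).some with hx₀def
  set fs : Fin D → ℕ → ℝ := fun i n => dist ((g ^ n) • x₀ i) (x₀ i) with hfs
  have hf0 : ∀ i, fs i 0 = 0 := by intro i; simp [hfs]
  have hfnn : ∀ i n, 0 ≤ fs i n := fun i n => dist_nonneg
  have hcompn : ∀ (i : Fin D) (y : X i) (m n : ℕ),
      (g ^ n) • ((g ^ m) • y) = (g ^ (m + n)) • y := by
    intro i y m n
    rw [smul_smul, ← pow_add, add_comm]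
  have hsubadd : ∀ i (m n : ℕ), fs i (m + n) ≤ fs i m + fs i n := by
    intro i m n
    simp only [hfs]
    calc dist ((g ^ (m + n)) • x₀ i) (x₀ i)
        = dist ((g ^ n) • ((g ^ m) • x₀ i)) (x₀ i) := by rw [hcompn]
      _ ≤ dist ((g ^ n) • ((g ^ m) • x₀ i)) ((g ^ n) • x₀ i)
            + dist ((g ^ n) • x₀ i) (x₀ i) := dist_triangle _ _ _
      _ = dist ((g ^ m) • x₀ i) (x₀ i) + dist ((g ^ n) • x₀ i) (x₀ i) := by
          rw [hiso i (g ^ n)]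
  have hrev : ∀ i (m n : ℕ), fs i m ≤ fs i (m + n) + fs i n := by
    intro i m n
    simp only [hfs]
    calc dist ((g ^ m) • x₀ i) (x₀ i)
        ≤ dist ((g ^ m) • x₀ i) ((g ^ (m + n)) • x₀ i)
            + dist ((g ^ (m + n)) • x₀ i) (x₀ i) := dist_triangle _ _ _
      _ = dist ((g ^ n) • x₀ i) (x₀ i) + dist ((g ^ (m + n)) • x₀ i) (x₀ i) := by
          have e : (g ^ (m + n)) • x₀ i = (g ^ m) • ((g ^ n) • x₀ i) := by
            rw [smul_smul, ← pow_add]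
          rw [e, hiso i (g ^ m), dist_comm (x₀ i) ((g ^ n) • x₀ i)]
      _ = dist ((g ^ (m + n)) • x₀ i) (x₀ i) + dist ((g ^ n) • x₀ i) (x₀ i) := by ring
  have habs : ∀ i (m n : ℕ), |fs i (m + n) - fs i m| ≤ fs i n := by
    intro i m n
    rw [abs_le]
    constructor
    · linarith [hrev i m n]
    · linarith [hsubadd i m n]
  have hlin : ∀ i (k : ℕ), fs i k ≤ (k : ℝ) * fs i 1 := by
    intro i k
    induction k with
    | zero => simp [hf0 i]
    | succ k ih =>
      have h1 := hsubadd i k 1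
      push_cast
      calc fs i (k + 1) ≤ fs i k + fs i 1 := h1
        _ ≤ (k : ℝ) * fs i 1 + fs i 1 := by linarith
        _ = ((k : ℝ) + 1) * fs i 1 := by ring
  -- signed-power distance identities
  have hzdist : ∀ (i : Fin D) (y : X i) (z : ℤ),
      dist ((g ^ z) • y) y = dist ((g ^ z.natAbs) • y) y := by
    intro i y z
    rcases le_or_gt 0 z with hz | hz
    · lift z to ℕ using hz
      rw [zpow_natCast, Int.natAbs_natCast]
    · have h2 := hiso i (g ^ (-z)) ((g ^ z) • y) y
      rw [smul_smul, ← zpow_add, neg_add_cancel, zpow_zero, one_smul] at h2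
      rw [← h2, dist_comm]
      have h3 : (-z) = ((z.natAbs : ℕ) : ℤ) := by omega
      rw [h3, zpow_natCast]
  have hzdiff : ∀ (i : Fin D) (y : X i) (m n : ℤ),
      dist ((g ^ m) • y) ((g ^ n) • y) = dist ((g ^ (m - n).natAbs) • y) y := by
    intro i y m n
    have h2 := hiso i (g ^ (-n)) ((g ^ m) • y) ((g ^ n) • y)
    rw [smul_smul, smul_smul, ← zpow_add, ← zpow_add, neg_add_cancel, zpow_zero, one_smul] at h2
    rw [← h2]
    have e : (-n) + m = m - n := by ring
    rw [e, hzdist i y (m - n)]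
  by_cases hlox : ∃ i, ∃ c : ℝ, 0 < c ∧ ∀ k : ℕ, 1 ≤ k → c * k ≤ fs i k
  · obtain ⟨i, c, hc, hck⟩ := hlox
    right
    refine ⟨i, x₀ i, max 1 (max (1 / c) (fs i 1)), 0, le_max_left _ _, le_refl 0, ?_⟩
    set C := max 1 (max (1 / c) (fs i 1)) with hC
    have hC1 : (1 : ℝ) ≤ C := le_max_left _ _
    have hCc : 1 / c ≤ C := le_trans (le_max_left _ _) (le_max_right _ _)
    have hCf : fs i 1 ≤ C := le_trans (le_max_right _ _) (le_max_right _ _)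
    have hCinv : 1 / C ≤ c := by
      rw [div_le_iff₀ (by linarith)]
      rw [div_le_iff₀ hc] at hCc
      nlinarith
    intro m n
    have hdd : dist ((g ^ m) • x₀ i) ((g ^ n) • x₀ i) = fs i (m - n).natAbs := by
      rw [hzdiff i (x₀ i) m n]
    have hcast : |(m : ℝ) - (n : ℝ)| = (((m - n).natAbs : ℕ) : ℝ) := by
      rw [Nat.cast_natAbs]
      push_cast
      ring_nf
    set kk := (m - n).natAbs with hkk
    rw [hdd, hcast]
    rcases Nat.eq_zero_or_pos kk with h0 | hpos
    · rw [h0, hf0 i]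
      simp
    · have hk1 : (1 : ℝ) ≤ (kk : ℝ) := by exact_mod_cast hpos
      constructor
      · have h1 : (kk : ℝ) / C = (kk : ℝ) * (1 / C) := by ring
        have h2 : (kk : ℝ) * (1 / C) ≤ (kk : ℝ) * c :=
          mul_le_mul_of_nonneg_left hCinv (by linarith)
        have h3 := hck kk hpos
        rw [h1]
        rw [mul_comm (c : ℝ) (kk : ℝ)] at h3
        linarith
      · have h1 := hlin i kk
        have h2 : (kk : ℝ) * fs i 1 ≤ (kk : ℝ) * C :=
          mul_le_mul_of_nonneg_left hCf (by linarith)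
        rw [mul_comm ((kk : ℝ)) C] at h2
        linarith
  -- no linear growth in any factor
  push_neg at hlox
  have hlox' : ∀ i, ∀ c : ℝ, 0 < c → ∃ k : ℕ, 1 ≤ k ∧ fs i k < c * k := by
    intro i c hc
    obtain ⟨k, hk1, hk2⟩ := hlox i c hc
    exact ⟨k, hk1, hk2⟩
  have hsublin : ∀ i, ∀ θ : ℝ, 0 < θ → ∃ k₀ : ℕ, ∀ k ≥ k₀, fs i k ≤ θ * k :=
    fun i => sublinear_of_no_linear (fs i) (hfnn i) (hsubadd i) (hlox' i)
  by_cases hbd : ∀ i, ∃ B : ℝ, ∀ n : ℕ, fs i n ≤ B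
  · -- all factors bounded: bounded orbits
    left
    intro x
    choose Bf hBf using hbd
    rw [Metric.isBounded_range_iff]
    set Cf : Fin D → ℝ := fun i => 2 * dist (x i) (x₀ i) + Bf i with hCfd
    set C := Finset.univ.sup' Finset.univ_nonempty Cf with hCd
    have hle : ∀ i, Cf i ≤ C := fun i => Finset.le_sup' Cf (Finset.mem_univ i)
    refine ⟨C, ?_⟩
    intro m n
    have hC0 : 0 ≤ C := by
      obtain ⟨i⟩ := (inferInstance : Nonempty (Fin D))
      refine le_trans ?_ (hle i)
      have h1 := hBf i 0
      rw [hf0 i] at h1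
      have h2 : (0:ℝ) ≤ dist (x i) (x₀ i) := dist_nonneg
      simp only [hCfd]
      linarith
    rw [dist_pi_le_iff hC0]
    intro i
    have happ : ∀ (z : ℤ), ((g ^ z) • x) i = (g ^ z) • (x i) := fun z => rfl
    rw [happ m, happ n, hzdiff i (x i) m n]
    set kk := (m - n).natAbs
    calc dist ((g ^ kk) • x i) (x i)
        ≤ dist ((g ^ kk) • x i) ((g ^ kk) • x₀ i) + dist ((g ^ kk) • x₀ i) (x₀ i)
            + dist (x₀ i) (x i) := dist_triangle4 _ _ _ _
      _ = dist (x i) (x₀ i) + fs i kk + dist (x₀ i) (x i) := by rw [hiso i (g ^ kk)]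
      _ ≤ 2 * dist (x i) (x₀ i) + Bf i := by
          rw [dist_comm (x₀ i) (x i)]
          linarith [hBf i kk]
      _ ≤ C := hle i
  -- some factor unbounded: contradiction with acylindricity
  exfalso
  push_neg at hbd
  obtain ⟨i₀, hub⟩ := hbd
  -- doubling and log bounds
  have hdbl : ∀ i, ∀ m : ℕ, 1 ≤ m → fs i (2 * m) ≤ fs i m + 2 * δ := by
    intro i m hm
    have hs : ∀ θ : ℝ, 0 < θ → ∃ k₀ : ℕ, ∀ k ≥ k₀, dist ((g ^ k) • x₀ i) (x₀ i) ≤ θ * k := by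
      simpa only [hfs] using hsublin i
    exact St3.doubling hδ (hgeo i) (hhyp i) (hiso i) g (x₀ i) hs m hm
  have ha1 : ∀ i, fs i 1 ≤ 1 + ∑ j : Fin D, fs j 1 := by
    intro i
    have h1 : fs i 1 ≤ ∑ j : Fin D, fs j 1 :=
      Finset.single_le_sum (fun j _ => hfnn j 1) (Finset.mem_univ i)
    linarith
  set a : ℝ := 1 + ∑ j : Fin D, fs j 1 with had
  clear_value a
  have ha0 : 1 ≤ a := by
    have h0 : 0 ≤ ∑ j : Fin D, fs j 1 := Finset.sum_nonneg (fun j _ => hfnn j 1)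
    rw [had]; linarith
  have hΦb : ∀ (i : Fin D) (k m : ℕ), m ≤ 2 ^ k → fs i m ≤ (a + 2 * δ) * (k + 1) := by
    intro i k m hm
    have h1 := St3.logbound (fs i) hδ (hf0 i) (hfnn i 1) (fun n => hsubadd i n 1) (hdbl i) k m hm
    have hk : (0:ℝ) ≤ (k:ℝ) + 1 := by positivity
    nlinarith [ha1 i]
  set ε : ℝ := 2 * δ + 2 ^ D + 1 with hεd
  clear_value ε
  have hε : 0 < ε := by rw [hεd]; positivity
  obtain ⟨R, N, hR0, hRN⟩ := hacyl ε hε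
  obtain ⟨k, hk⟩ := St3.exp_beats ((N + 1 : ℝ) * (2 * (a + 2 * δ) + 1) ^ D) D
  set W : ℕ := 2 ^ k with hWd
  set Φ : ℝ := (a + 2 * δ) * (k + 1) with hΦd
  clear_value Φ
  have haδ : 0 ≤ a + 2 * δ := by linarith
  have hΦ0 : 0 ≤ Φ := by
    rw [hΦd]
    have : (0:ℝ) ≤ (k:ℝ) + 1 := by positivity
    nlinarith
  set b : ℕ := Nat.floor (2 * Φ) + 1 with hbd2
  clear_value W b
  have hbase : (N + 1) * b ^ D ≤ W + 1 := by
    have h1 : ((b : ℕ) : ℝ) ≤ 2 * Φ + 1 := by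
      rw [hbd2]
      push_cast
      have := Nat.floor_le (by linarith : (0:ℝ) ≤ 2 * Φ)
      linarith
    have h2 : (2:ℝ) * Φ + 1 ≤ (2 * (a + 2 * δ) + 1) * ((k:ℝ) + 1) := by
      rw [hΦd]
      have hk1 : (1:ℝ) ≤ (k:ℝ) + 1 := by
        have := Nat.cast_nonneg (α := ℝ) k
        linarith
      nlinarith
    have hb0 : (0:ℝ) ≤ ((b:ℕ):ℝ) := Nat.cast_nonneg b
    have h3 : (((N + 1) * b ^ D : ℕ) : ℝ) ≤ ((2 ^ k : ℕ) : ℝ) := by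
      push_cast
      calc ((N:ℝ) + 1) * (b:ℝ) ^ D ≤ ((N:ℝ) + 1) * ((2 * (a + 2*δ) + 1) * ((k:ℝ)+1)) ^ D := by
            have hpow := pow_le_pow_left₀ hb0 (le_trans h1 h2) D
            have hN0 : (0:ℝ) ≤ (N:ℝ) + 1 := by positivity
            exact mul_le_mul_of_nonneg_left hpow hN0
        _ = ((N:ℝ) + 1) * (2 * (a + 2*δ) + 1) ^ D * ((k:ℝ)+1) ^ D := by
            rw [mul_pow]; ring
        _ ≤ (2:ℝ) ^ k := hk
    have h4 : (N + 1) * b ^ D ≤ 2 ^ k := by exact_mod_cast h3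
    rw [hWd]
    omega
  set U : Finset (Fin D) := Finset.univ.filter (fun i => ∀ B : ℝ, ∃ n : ℕ, B < fs i n) with hUd
  clear_value U
  have hi₀U : i₀ ∈ U := by
    rw [hUd, Finset.mem_filter]
    exact ⟨Finset.mem_univ _, hub⟩
  have hUcard : U.card ≤ D := by
    rw [hUd]
    have h1 := Finset.card_filter_le Finset.univ (fun i => ∀ B : ℝ, ∃ n : ℕ, B < fs i n)
    simpa using h1
  have hprops : ∀ i ∈ U, (∀ B : ℝ, ∃ n : ℕ, B < fs i n) ∧
      (∀ j ≤ W, fs i j ≤ Φ) ∧ (∀ m n : ℕ, |fs i (m + n) - fs i m| ≤ fs i n) := by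
    intro i hi
    rw [hUd, Finset.mem_filter] at hi
    refine ⟨hi.2, ?_, habs i⟩
    intro j hj
    rw [hΦd]
    exact hΦb i k j (by rwa [hWd] at hj)
  obtain ⟨T, hTsub, hT0, hTcard, hTflat⟩ :=
    St3.flat fs W N D Φ hΦ0 b hbd2 hbase U hUcard hprops (2 * Φ + 2 * 2 ^ D + R + 1)
  have hTW : ∀ j ∈ T, j ≤ W := fun j hj => (Finset.mem_Icc.mp (hTsub hj)).2
  have hTcard' : N + 1 ≤ T.card := by
    refine le_trans ?_ hTcard
    have hbpos : 0 < b := by rw [hbd2]; omega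
    have h1le : 0 < b ^ (D - U.card) := pow_pos hbpos _
    calc N + 1 = (N + 1) * 1 := (mul_one _).symm
      _ ≤ (N + 1) * b ^ (D - U.card) := Nat.mul_le_mul_left _ h1le
  have hnoper : ∀ d : ℕ, 1 ≤ d → g ^ d ≠ 1 := by
    intro d hd hgd
    have hper : ∀ n : ℕ, (g : Γ) ^ n = g ^ (n % d) := by
      intro n
      conv_lhs => rw [← Nat.div_add_mod n d]
      rw [pow_add, pow_mul, hgd, one_pow, one_mul]
    set B := (Finset.range d).sup' ⟨0, Finset.mem_range.mpr (by omega)⟩ (fs i₀) with hBd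
    obtain ⟨n, hn⟩ := hub B
    have he : fs i₀ n = fs i₀ (n % d) := by
      simp only [hfs]
      rw [hper n]
    have hmem : n % d ∈ Finset.range d := Finset.mem_range.mpr (Nat.mod_lt n (by omega))
    have hle := Finset.le_sup' (fs i₀) hmem
    rw [he] at hn
    exact absurd hle (by rw [← hBd]; linarith)
  have hpow2D : ((2:ℝ)) ^ U.card ≤ 2 ^ D := pow_le_pow_right₀ (by norm_num) hUcard
  have hone2D : (1:ℝ) ≤ 2 ^ D := one_le_pow₀ (by norm_num)
  have key : ∀ i : Fin D, ∃ z w : X i,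
      (i = i₀ → R ≤ dist z w) ∧
      ∀ j ∈ T, dist ((g ^ j) • z) z ≤ ε ∧ dist ((g ^ j) • w) w ≤ ε := by
    intro i
    by_cases hiU : i ∈ U
    · obtain ⟨M, hM1, hM2⟩ := hTflat i hiU
      obtain ⟨α, hα⟩ := hgeo i (x₀ i) ((g ^ M) • x₀ i)
      set L := dist (x₀ i) ((g ^ M) • x₀ i) with hLd
      have hLfs : L = fs i M := by rw [hLd]; exact dist_comm _ _
      set Ts := T.sup' ⟨0, hT0⟩ (fs i) with hTsd
      have hTsle : ∀ j ∈ T, fs i j ≤ Ts := fun j hj => Finset.le_sup' _ hj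
      have hTs0 : 0 ≤ Ts := by
        have h1 := hTsle 0 hT0
        have h2 := hf0 i
        linarith
      have hTsΦ : Ts ≤ Φ := by
        apply Finset.sup'_le
        intro j hj
        rw [hΦd]
        exact hΦb i k j (by rw [← hWd]; exact hTW j hj)
      have hflatD : ∀ j ∈ T, |fs i (M + j) - fs i M| ≤ 2 ^ D :=
        fun j hj => le_trans (hM2 j hj) hpow2D
      have hLbig : 2 * Ts + 2 * 2 ^ D + R + 1 ≤ L := by
        rw [hLfs]
        calc 2 * Ts + 2 * 2 ^ D + R + 1 ≤ 2 * Φ + 2 * 2 ^ D + R + 1 := by linarith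
          _ ≤ fs i M := hM1
      set A := Ts + 2 ^ D with hAd
      have hA0 : 0 ≤ A := by
        rw [hAd]
        have : (0:ℝ) ≤ (2:ℝ) ^ D := by positivity
        linarith
      have hALA : A ≤ L - A := by
        rw [hAd]
        linarith
      have hdeep : ∀ t : ℝ, A ≤ t → t ≤ L - A → ∀ j ∈ T,
          dist ((g ^ j) • α t) (α t) ≤ ε := by
        intro t h1 h2 j hj
        have hfsj : fs i j = dist ((g ^ j) • x₀ i) (x₀ i) := rfl
        have hfsMj : fs i (M + j) = dist ((g ^ (M + j)) • x₀ i) (x₀ i) := rfl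
        have hfsM : fs i M = dist ((g ^ M) • x₀ i) (x₀ i) := rfl
        have hFf : |dist ((g ^ (M + j)) • x₀ i) (x₀ i) - dist (x₀ i) ((g ^ M) • x₀ i)| ≤ 2 ^ D := by
          rw [dist_comm (x₀ i) ((g ^ M) • x₀ i), ← hfsMj, ← hfsM]
          exact hflatD j hj
        have hTj := hTsle j hj
        rw [hfsj] at hTj
        have hj1 : dist ((g ^ j) • x₀ i) (x₀ i) + 2 ^ D ≤ t := by
          rw [hAd] at h1
          linarith
        have hj2 : t ≤ dist (x₀ i) ((g ^ M) • x₀ i) - (dist ((g ^ j) • x₀ i) (x₀ i) + 2 ^ D) := by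
          rw [← hLd]
          rw [hAd] at h2
          linarith
        have hdd := St3.deep (hgeo i) (hhyp i) (hiso i) g (x₀ i) M j hα (2 ^ D) t hFf hj1 hj2
        rw [hεd]
        linarith
      refine ⟨α A, α (L - A), ?_, ?_⟩
      · intro _
        have hs1 : A ≤ dist (x₀ i) ((g ^ M) • x₀ i) := by rw [← hLd]; linarith
        have ht0 : (0:ℝ) ≤ L - A := by linarith
        have ht1 : L - A ≤ dist (x₀ i) ((g ^ M) • x₀ i) := by rw [← hLd]; linarith
        have hd := St3.geo_dist hα hA0 hs1 ht0 ht1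
        rw [hd, abs_of_nonpos (by linarith : A - (L - A) ≤ 0)]
        linarith
      · intro j hj
        exact ⟨hdeep A (le_refl A) hALA j hj, hdeep (L - A) hALA (le_refl (L - A)) j hj⟩
    · have hbB : ∃ B : ℝ, ∀ n : ℕ, fs i n ≤ B := by
        by_contra hcon
        apply hiU
        rw [hUd, Finset.mem_filter]
        refine ⟨Finset.mem_univ _, ?_⟩
        push_neg at hcon
        exact hcon
      obtain ⟨B, hB⟩ := hbB
      have hBz : ∀ n : ℤ, dist ((g ^ n) • x₀ i) (x₀ i) ≤ B := by
        intro n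
        rw [hzdist i (x₀ i) n]
        exact hB n.natAbs
      obtain ⟨z, hz⟩ := St3.quasicenter hδ (hgeo i) (hhyp i) (hiso i) g (x₀ i) B hBz
      refine ⟨z, z, ?_, ?_⟩
      · intro hii
        exfalso
        apply hiU
        rw [hii]
        exact hi₀U
      · intro j hj
        have h1 : dist ((g ^ j) • z) z ≤ 2 * δ + 1 := by
          have h2 := hz (j : ℤ)
          rwa [zpow_natCast] at h2
        have h3 : dist ((g ^ j) • z) z ≤ ε := by
          rw [hεd]
          linarith
        exact ⟨h3, h3⟩
  choose pz qz hpq1 hpq2 using key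
  have hdistpq : R ≤ dist pz qz := le_trans (hpq1 i₀ rfl) (dist_le_pi_dist pz qz i₀)
  obtain ⟨hfin, hcardle⟩ := hRN pz qz hdistpq
  have hmem : ∀ j ∈ T, (g ^ j) ∈ coarseStab2 Γ ε pz qz := by
    intro j hj
    constructor
    · rw [dist_pi_le_iff (le_of_lt hε)]
      intro i
      exact (hpq2 i j hj).1
    · rw [dist_pi_le_iff (le_of_lt hε)]
      intro i
      exact (hpq2 i j hj).2
  have hltinj : ∀ u v : ℕ, u < v → (g : Γ) ^ u ≠ g ^ v := by
    intro u v huv heq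
    have h1 : (g : Γ) ^ v = g ^ u * g ^ (v - u) := by
      rw [← pow_add]
      congr 1
      omega
    rw [← heq] at h1
    exact hnoper (v - u) (by omega) (left_eq_mul.mp h1)
  have hinj : Set.InjOn (fun j : ℕ => (g : Γ) ^ j) T := by
    intro u hu v hv huv
    by_contra hne'
    rcases Nat.lt_or_ge u v with h | h
    · exact hltinj u v h huv
    · have h2 : v < u := by omega
      exact hltinj v u h2 huv.symm
  have hQsub : ((T.image (fun j => (g : Γ) ^ j)) : Set Γ) ⊆ coarseStab2 Γ ε pz qz := by
    intro γ hγ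
    simp only [Finset.coe_image, Set.mem_image, Finset.mem_coe] at hγ
    obtain ⟨j, hj, rfl⟩ := hγ
    exact hmem j hj
  have hQcard : (T.image (fun j => (g : Γ) ^ j)).card = T.card :=
    Finset.card_image_of_injOn hinj
  have hfinal := Set.ncard_le_ncard hQsub hfin
  rw [Set.ncard_coe_finset, hQcard] at hfinal
  omega
end

section
/- Let D ≥ 1 and δ ≥ 0, let X₁, …, X_D be geodesic metric spaces each of which is δ-hyperbolic, and let Γ = K₁ × ⋯ × K_F be a direct product of groups acting by isometries on each Xᵢ; equip the product 𝕏 = X₁ × ⋯ × X_D with the supremum metric and let Γ act diagonally. Assume the action of Γ on 𝕏 is AU-acylindrical, that the action of Γ on each factor Xᵢ is of general type, and that for each j ∈ {1, …, F} there is at least one index i such that the action of K_j on Xᵢ is of general type. Then F ≤ D. -/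
open Set Metric

section Aux

variable {X : Type*} [PseudoMetricSpace X]

lemma gromovProd_def (o x y : X) :
    gromovProd o x y = (dist x o + dist y o - dist x y) / 2 := rfl

lemma gromovProd_nonneg (o x y : X) : 0 ≤ gromovProd o x y := by
  have h1 := dist_triangle x o y
  have h2 := dist_comm o y
  rw [gromovProd_def]
  linarith [dist_triangle x o y, dist_comm o y]

lemma gromovProd_comm (o x y : X) : gromovProd o x y = gromovProd o y x := by
  rw [gromovProd_def, gromovProd_def, dist_comm x y]; ring

lemma gromovProd_le_left (o x y : X) : gromovProd o x y ≤ dist x o := by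
  rw [gromovProd_def]
  linarith [dist_triangle y x o, dist_comm y x]

/-- The four-point inequality, derived from thin triangles in a geodesic space. -/
lemma four_point {δ : ℝ} (hgeo : IsGeodesicSpace X) (hhyp : IsDeltaHyperbolic X δ)
    (o x y z : X) :
    min (gromovProd o x y) (gromovProd o y z) - δ ≤ gromovProd o x z := by
  obtain ⟨α, hα⟩ := hgeo o x
  obtain ⟨β, hβ⟩ := hgeo o y
  obtain ⟨γ, hγ⟩ := hgeo o z
  set m0 := min (gromovProd o x y) (gromovProd o y z) with hm0def
  have h0 : 0 ≤ m0 := le_min (gromovProd_nonneg o x y) (gromovProd_nonneg o y z)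
  have hm1 : m0 ≤ gromovProd o x y := min_le_left _ _
  have hm2 : m0 ≤ gromovProd o y z := min_le_right _ _
  have hxy : dist (α m0) (β m0) ≤ δ :=
    hhyp o x y α β hα hβ m0 (Set.mem_Icc.mpr ⟨h0, hm1⟩)
  have hyz : dist (β m0) (γ m0) ≤ δ :=
    hhyp o y z β γ hβ hγ m0 (Set.mem_Icc.mpr ⟨h0, hm2⟩)
  have hmx : m0 ≤ dist o x := by
    have := gromovProd_le_left o x y
    rw [dist_comm o x]; linarith
  have hmz : m0 ≤ dist o z := by
    have h1 : gromovProd o y z ≤ dist z o := by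
      rw [gromovProd_comm]; exact gromovProd_le_left o z y
    rw [dist_comm o z]; linarith
  have hdx : dist (α m0) x = dist o x - m0 := by
    have h1 := hα.2.2 m0 (Set.mem_Icc.mpr ⟨h0, hmx⟩) (dist o x)
      (Set.mem_Icc.mpr ⟨dist_nonneg, le_rfl⟩)
    rw [hα.2.1] at h1
    rw [h1, abs_of_nonpos (by linarith), neg_sub]
  have hdz : dist (γ m0) z = dist o z - m0 := by
    have h1 := hγ.2.2 m0 (Set.mem_Icc.mpr ⟨h0, hmz⟩) (dist o z)
      (Set.mem_Icc.mpr ⟨dist_nonneg, le_rfl⟩)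
    rw [hγ.2.1] at h1
    rw [h1, abs_of_nonpos (by linarith), neg_sub]
  have hchain : dist x z ≤ (dist o x - m0) + δ + δ + (dist o z - m0) := by
    have t1 : dist x z ≤ dist x (α m0) + dist (α m0) (β m0) + dist (β m0) z :=
      dist_triangle4 _ _ _ _
    have t2 : dist (β m0) z ≤ dist (β m0) (γ m0) + dist (γ m0) z := dist_triangle _ _ _
    have t3 : dist x (α m0) = dist (α m0) x := dist_comm _ _
    linarith
  rw [gromovProd_def]
  have e1 : dist x o = dist o x := dist_comm _ _
  have e2 : dist z o = dist o z := dist_comm _ _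
  linarith

variable {G : Type*} [Group G] [MulAction G X]

/-- A loxodromic escapes to infinity from any basepoint. -/
lemma lox_escape (hiso : ∀ (g : G) (x y : X), dist (g • x) (g • y) = dist x y)
    {u : G} (hu : IsLoxodromicOn X u) (o : X) (T : ℝ) :
    ∃ m : ℕ, 1 ≤ m ∧ T < dist ((u ^ (m : ℤ)) • o) o := by
  obtain ⟨x₀, C, lam, hC, hlam, H⟩ := hu
  obtain ⟨m₀, hm₀⟩ := exists_nat_gt (C * (T + lam + 2 * dist x₀ o))
  refine ⟨m₀ + 1, Nat.le_add_left 1 m₀, ?_⟩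
  set m : ℕ := m₀ + 1 with hmdef
  have hC0 : (0:ℝ) < C := lt_of_lt_of_le one_pos hC
  have hmR : C * (T + lam + 2 * dist x₀ o) < (m : ℝ) := by
    refine lt_of_lt_of_le hm₀ ?_
    exact_mod_cast Nat.le_succ m₀
  have hdiv : T + lam + 2 * dist x₀ o < (m : ℝ) / C := by
    rw [lt_div_iff₀ hC0]
    nlinarith
  have hlow := (H (m : ℤ) 0).1
  rw [zpow_zero, one_smul] at hlow
  have habs : |((m : ℤ) : ℝ) - ((0 : ℤ) : ℝ)| = (m : ℝ) := by
    push_cast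
    rw [sub_zero]
    exact abs_of_nonneg (by positivity)
  rw [habs] at hlow
  have h1 : dist ((u ^ (m : ℤ)) • x₀) x₀ ≤
      dist ((u ^ (m : ℤ)) • x₀) ((u ^ (m : ℤ)) • o) + dist ((u ^ (m : ℤ)) • o) o
        + dist o x₀ := dist_triangle4 _ _ _ _
  rw [hiso] at h1
  have h2 : dist o x₀ = dist x₀ o := dist_comm _ _
  linarith

/-- If every signed power of the loxodromic `u` has bounded Gromov product with `p`
(as seen from `o`), and `p` has the same displacement function as `o` under `u`,
then `p` is close to `o`. -/
lemma ortho_bound (hiso : ∀ (g : G) (x y : X), dist (g • x) (g • y) = dist x y)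
    {δ : ℝ} (hgeo : IsGeodesicSpace X) (hhyp : IsDeltaHyperbolic X δ)
    {u : G} (hu : IsLoxodromicOn X u) (o p : X) (B'' : ℝ)
    (hdisp : ∀ m : ℤ, dist ((u ^ m) • p) p = dist ((u ^ m) • o) o)
    (hP : ∀ e : ℤ, (e = 1 ∨ e = -1) → ∀ m : ℕ, 1 ≤ m →
      gromovProd o ((u ^ (e * (m : ℤ))) • o) p ≤ B'') :
    dist p o ≤ 2 * B'' + δ := by
  obtain ⟨m, hm1, hma⟩ := lox_escape hiso hu o (2 * B'' + δ)
  set A := (u ^ (m : ℤ)) • o with hA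
  set q := (u ^ (m : ℤ)) • p with hq
  set a := dist A o with ha
  set t := dist p o with ht
  have P1 : gromovProd o A p ≤ B'' := by
    have := hP 1 (Or.inl rfl) m hm1
    rwa [one_mul] at this
  have P2 : gromovProd o ((u ^ (-(m : ℤ))) • o) p ≤ B'' := by
    have := hP (-1) (Or.inr rfl) m hm1
    rwa [neg_one_mul] at this
  have haneg : dist ((u ^ (-(m : ℤ))) • o) o = a := by
    rw [zpow_neg]
    have h1 := hiso (u ^ (m : ℤ)) ((u ^ (m : ℤ))⁻¹ • o) o
    rw [smul_inv_smul] at h1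
    exact h1.symm.trans (dist_comm _ _)
  have hVaux : dist ((u ^ (-(m : ℤ))) • o) p = dist q o := by
    rw [zpow_neg]
    have h1 := hiso (u ^ (m : ℤ)) ((u ^ (m : ℤ))⁻¹ • o) p
    rw [smul_inv_smul] at h1
    exact h1.symm.trans (dist_comm _ _)
  have hU : a + t - 2 * B'' ≤ dist A p := by
    rw [gromovProd_def] at P1
    linarith
  have hV : a + t - 2 * B'' ≤ dist q o := by
    rw [gromovProd_def, haneg, hVaux] at P2
    linarith
  have hq1 : dist q p = a := hdisp (m : ℤ)
  have hq2 : dist q A = t := hiso (u ^ (m : ℤ)) p o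
  have h4 := four_point hgeo hhyp A o p q
  have e1 : gromovProd A o p = (a + dist A p - t) / 2 := by
    rw [gromovProd_def, dist_comm o A, dist_comm p A, dist_comm o p]
  have e2 : gromovProd A p q = (dist A p + t - a) / 2 := by
    rw [gromovProd_def, dist_comm p A, hq2, dist_comm p q, hq1]
  have e3 : gromovProd A o q = (a + t - dist q o) / 2 := by
    rw [gromovProd_def, dist_comm o A, hq2, dist_comm o q]
  rw [e1, e2, e3] at h4
  have hZ : (a + t - dist q o) / 2 ≤ B'' := by linarith
  have hX : a - B'' ≤ (a + dist A p - t) / 2 := by linarith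
  have hY : t - B'' ≤ (dist A p + t - a) / 2 := by linarith
  have hmin : min (a - B'') (t - B'') ≤ B'' + δ :=
    le_trans (min_le_min hX hY) (by linarith)
  rcases le_total (a - B'') (t - B'') with hc | hc
  · rw [min_eq_left hc] at hmin
    linarith
  · rw [min_eq_right hc] at hmin
    linarith

/-- Core geometric lemma: a loxodromic `k` cannot commute with two independent
loxodromics `g`, `h` on a geodesic hyperbolic space. -/
lemma core_no_commuting {Y : Type*} [PseudoMetricSpace Y] [MulAction G Y]
    (hiso : ∀ (g : G) (x y : Y), dist (g • x) (g • y) = dist x y)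
    {δ : ℝ} (hgeo : IsGeodesicSpace Y) (hhyp : IsDeltaHyperbolic Y δ)
    {g h k : G} (hgk : Commute g k) (hhk : Commute h k)
    (hg : IsLoxodromicOn Y g) (hh : IsLoxodromicOn Y h) (hk : IsLoxodromicOn Y k)
    (hind : IndependentLox Y g h) : False := by
  obtain ⟨o, B, hB⟩ := hind
  set B'' := B + δ with hB''def
  obtain ⟨n, hn1, hnT⟩ := lox_escape hiso hk o (2 * B'' + δ)
  set p := (k ^ (n : ℤ)) • o with hp
  have hdisp : ∀ (u : G), Commute u k → ∀ m : ℤ,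
      dist ((u ^ m) • p) p = dist ((u ^ m) • o) o := by
    intro u huk m
    have hcom : (u ^ m) * (k ^ (n : ℤ)) = (k ^ (n : ℤ)) * (u ^ m) :=
      (huk.zpow_zpow m (n : ℤ)).eq
    calc dist ((u ^ m) • p) p
        = dist (((u ^ m) * (k ^ (n : ℤ))) • o) ((k ^ (n : ℤ)) • o) := by
          rw [hp, smul_smul]
      _ = dist (((k ^ (n : ℤ)) * (u ^ m)) • o) ((k ^ (n : ℤ)) • o) := by rw [hcom]
      _ = dist ((k ^ (n : ℤ)) • ((u ^ m) • o)) ((k ^ (n : ℤ)) • o) := by rw [mul_smul]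
      _ = dist ((u ^ m) • o) o := hiso _ _ _
  have htle : dist p o ≤ 2 * B'' + δ := by
    by_cases hPG : ∀ e : ℤ, (e = 1 ∨ e = -1) → ∀ m : ℕ, 1 ≤ m →
        gromovProd o ((g ^ (e * (m : ℤ))) • o) p ≤ B''
    · exact ortho_bound hiso hgeo hhyp hg o p B'' (hdisp g hgk) hPG
    · push_neg at hPG
      obtain ⟨e, he, m, hm, hgt2⟩ := hPG
      have hPH : ∀ e' : ℤ, (e' = 1 ∨ e' = -1) → ∀ m' : ℕ, 1 ≤ m' →
          gromovProd o ((h ^ (e' * (m' : ℤ))) • o) p ≤ B'' := by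
        intro e' he' m' hm'
        have h4 := four_point hgeo hhyp o ((g ^ (e * (m : ℤ))) • o) p
          ((h ^ (e' * (m' : ℤ))) • o)
        have hBm := hB e e' he he' m m' hm hm'
        have hmin : min (gromovProd o ((g ^ (e * (m : ℤ))) • o) p)
            (gromovProd o p ((h ^ (e' * (m' : ℤ))) • o)) ≤ B + δ := by linarith
        rw [gromovProd_comm]
        rcases le_or_gt (gromovProd o p ((h ^ (e' * (m' : ℤ))) • o)) B'' with hq | hq
        · exact hq
        · exfalso
          have := lt_min hgt2 hq
          rw [hB''def] at this
          linarith
      exact ortho_bound hiso hgeo hhyp hh o p B'' (hdisp h hhk) hPH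
  linarith

end Aux

/-- Let `Γ = K₁ × ⋯ × K_F` act AU-acylindrically on a finite product of `D`
geodesic `δ`-hyperbolic spaces (sup metric, diagonal action) with all factor actions of general
type, and suppose each direct factor `K_j` acts with general type on at least one factor.
Then `F ≤ D`. -/
theorem factor_bound
    {D F : ℕ} (hD : 1 ≤ D) (δ : ℝ) (hδ : 0 ≤ δ)
    (X : Fin D → Type*) [∀ i, MetricSpace (X i)]
    (K : Fin F → Type*) [∀ j, Group (K j)]
    [∀ i, MulAction (∀ j, K j) (X i)]
    (hiso : ∀ (i : Fin D) (g : ∀ j, K j) (x y : X i), dist (g • x) (g • y) = dist x y)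
    (hgeo : ∀ i, IsGeodesicSpace (X i))
    (hhyp : ∀ i, IsDeltaHyperbolic (X i) δ)
    (hAU : IsAUAcylindricalAction (∀ j, K j) (∀ i, X i))
    (hgt : ∀ i, IsGeneralTypeAction (∀ j, K j) (X i))
    (hfac : ∀ j : Fin F, ∃ i : Fin D,
      IsGeneralTypeOn (X i) (Set.range (Pi.mulSingle j : K j → ∀ j', K j'))) :
    F ≤ D := by
  classical
  choose phi hphi using hfac
  have hinj : Function.Injective phi := by
    intro j j' hjj'
    by_contra hne
    obtain ⟨g, hgmem, h, hhmem, hglox, hhlox, hind⟩ := hphi j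
    obtain ⟨k, hkmem, k2, hk2mem, hklox, hk2lox, hind2⟩ := hphi j'
    obtain ⟨a, ha⟩ := hgmem
    obtain ⟨b, hb⟩ := hhmem
    obtain ⟨c, hc⟩ := hkmem
    have hgk : Commute g k := by
      rw [← ha, ← hc]; exact Pi.mulSingle_commute hne a c
    have hhk : Commute h k := by
      rw [← hb, ← hc]; exact Pi.mulSingle_commute hne b c
    have hklox' : IsLoxodromicOn (X (phi j)) k := by
      rw [hjj']; exact hklox
    exact core_no_commuting (hiso (phi j)) (hgeo (phi j)) (hhyp (phi j))
      hgk hhk hglox hhlox hklox' hind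
  have hcard := Fintype.card_le_of_injective phi hinj
  simpa using hcard
end

section
/- Let Y be an unbounded metric space in which every closed bounded subset is compact (a proper metric space; for instance a complete, locally compact geodesic space). If an action of a group G on Y by isometries is AU-acylindrical, then it is proper: for every ε > 0 and every x ∈ Y the set {g ∈ G : d(g·x, x) ≤ ε} is finite. -/
open Set Metric

/-- On an unbounded metric space in which every closed bounded subset is
compact, an AU-acylindrical isometric action is proper. -/
theorem AU_acylindrical_implies_proper
    (G Y : Type*) [Group G] [MetricSpace Y] [MulAction G Y]
    (hiso : ∀ (g : G) (x y : Y), dist (g • x) (g • y) = dist x y)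
    (hHeineBorel : ∀ s : Set Y, IsClosed s → Bornology.IsBounded s → IsCompact s)
    (hunb : ¬ Bornology.IsBounded (Set.univ : Set Y))
    (hAU : IsAUAcylindricalAction G Y) :
    ∀ ε : ℝ, 0 < ε → ∀ x : Y, {g : G | dist (g • x) x ≤ ε}.Finite := by
  intro ε hε x
  by_contra hfin
  rw [← Set.not_infinite, not_not] at hfin
  obtain ⟨R, hR0, hR⟩ := hAU (2 * ε) (by linarith)
  -- pick a point y far from x
  obtain ⟨y, hy⟩ : ∃ y : Y, R ≤ dist x y := by
    by_contra h
    push_neg at h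
    exact hunb ((Metric.isBounded_ball (x := x) (r := R)).subset
      (fun z _ => by simpa [Metric.mem_ball, dist_comm] using h z))
  set S : Set G := {g : G | dist (g • x) x ≤ ε} with hS
  -- the orbit points g • y for g ∈ S lie in a compact ball
  set K : Set Y := Metric.closedBall x (dist y x + ε) with hKdef
  have hK : IsCompact K := hHeineBorel K Metric.isClosed_closedBall Metric.isBounded_closedBall
  have hmem : ∀ g ∈ S, g • y ∈ K := by
    intro g hg
    simp only [hKdef, Metric.mem_closedBall]
    calc dist (g • y) x ≤ dist (g • y) (g • x) + dist (g • x) x := dist_triangle _ _ _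
      _ ≤ dist y x + ε := by rw [hiso]; have hg' : dist (g • x) x ≤ ε := hg; linarith
  -- cover the ball by finitely many balls of radius ε/2
  obtain ⟨t, htfin, htsub⟩ := (Metric.totallyBounded_iff.mp hK.totallyBounded) (ε / 2)
    (by linarith)
  -- pigeonhole: some small ball receives infinitely many orbit points from S
  have hcover : S ⊆ ⋃ c ∈ t, {g ∈ S | g • y ∈ Metric.ball c (ε / 2)} := by
    intro g hg
    obtain ⟨c, hc, hc2⟩ := Set.mem_iUnion₂.mp (htsub (hmem g hg))
    exact Set.mem_iUnion₂.mpr ⟨c, hc, hg, hc2⟩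
  have : ∃ c ∈ t, ({g ∈ S | g • y ∈ Metric.ball c (ε / 2)}).Infinite := by
    by_contra h
    push_neg at h
    exact hfin (Set.Finite.subset (Set.Finite.biUnion htfin h) hcover)
  obtain ⟨c, _, hT⟩ := this
  set T : Set G := {g ∈ S | g • y ∈ Metric.ball c (ε / 2)} with hTdef
  obtain ⟨g₀, hg₀⟩ := hT.nonempty
  -- translate: g₀⁻¹ * h lies in the two-point coarse stabilizer
  have hsub : (fun h => g₀⁻¹ * h) '' T ⊆ coarseStab2 G (2 * ε) x y := by
    rintro _ ⟨h, hh, rfl⟩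
    have key : ∀ z : Y, dist ((g₀⁻¹ * h) • z) z = dist (h • z) (g₀ • z) := by
      intro z
      rw [mul_smul, ← hiso g₀ (g₀⁻¹ • (h • z)) z, smul_inv_smul]
    constructor
    · rw [key]
      calc dist (h • x) (g₀ • x) ≤ dist (h • x) x + dist x (g₀ • x) := dist_triangle _ _ _
        _ ≤ 2 * ε := by have h1 : dist (h • x) x ≤ ε := hh.1; have h2 : dist (g₀ • x) x ≤ ε := hg₀.1; rw [dist_comm x (g₀ • x)]; linarith
    · rw [key]
      calc dist (h • y) (g₀ • y) ≤ dist (h • y) c + dist c (g₀ • y) := dist_triangle _ _ _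
        _ ≤ 2 * ε := by
          have h1 : dist (h • y) c < ε / 2 := hh.2
          have h2 : dist (g₀ • y) c < ε / 2 := hg₀.2
          rw [dist_comm c (g₀ • y)]; linarith
  have himg : ((fun h => g₀⁻¹ * h) '' T).Infinite :=
    hT.image (Set.injOn_of_injective (mul_right_injective g₀⁻¹))
  exact himg (Set.Finite.subset (hR x y hy) hsub)
end

section
/- Let Y be a metric space that is uniformly locally compact in the sense that for all ρ, τ > 0 there is C(ρ, τ) ∈ ℕ such that every closed ball of radius ρ in Y can be covered by at most C(ρ, τ) open balls of radius τ. Assume further that there is T > 0 such that for every x ∈ Y and every n ∈ ℕ there is y ∈ Y with nT ≤ d(x, y) ≤ (n+1)T. If an action of a group G on Y by isometries is acylindrical, then it is uniformly proper: for every ε > 0 there is N such that for every x ∈ Y the set {g ∈ G : d(g·x, x) ≤ ε} has at most N elements. -/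
open Set Metric

/-- Auxiliary: a finite union of sets, each finite of cardinality at most `N`, is finite of
cardinality at most `card * N`. -/
lemma finite_ncard_biUnion {α β : Type*} (s : Finset β) (f : β → Set α) (N : ℕ)
    (h : ∀ c ∈ s, (f c).Finite ∧ (f c).ncard ≤ N) :
    (⋃ c ∈ s, f c).Finite ∧ (⋃ c ∈ s, f c).ncard ≤ s.card * N := by
  classical
  induction s using Finset.induction_on with
  | empty => simp
  | @insert a s ha ih =>
    have ha' := h a (Finset.mem_insert_self a s)
    have ih' := ih (fun c hc => h c (Finset.mem_insert_of_mem hc))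
    rw [Finset.set_biUnion_insert]
    refine ⟨ha'.1.union ih'.1, ?_⟩
    calc (f a ∪ ⋃ c ∈ s, f c).ncard ≤ (f a).ncard + (⋃ c ∈ s, f c).ncard :=
          Set.ncard_union_le _ _
      _ ≤ N + s.card * N := add_le_add ha'.2 ih'.2
      _ = (insert a s).card * N := by
          rw [Finset.card_insert_of_notMem ha]; ring

/-- On a uniformly locally compact metric space in which from any point
there are points at distance in `[nT, (n+1)T]` for all `n`, an acylindrical isometric action
is uniformly proper. -/
theorem acylindrical_implies_uniformly_proper
    (G Y : Type*) [Group G] [MetricSpace Y] [MulAction G Y]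
    (hiso : ∀ (g : G) (x y : Y), dist (g • x) (g • y) = dist x y)
    (hulc : ∀ ρ τ : ℝ, 0 < ρ → 0 < τ → ∃ C : ℕ, ∀ x : Y, ∃ s : Finset Y,
      s.card ≤ C ∧ Metric.closedBall x ρ ⊆ ⋃ c ∈ s, Metric.ball c τ)
    (T : ℝ) (hT : 0 < T)
    (hspace : ∀ (x : Y) (n : ℕ), ∃ y : Y, (n : ℝ) * T ≤ dist x y ∧ dist x y ≤ ((n : ℝ) + 1) * T)
    (hacyl : IsAcylindricalAction G Y) :
    ∀ ε : ℝ, 0 < ε → ∃ N : ℕ, ∀ x : Y,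
      {g : G | dist (g • x) x ≤ ε}.Finite ∧ {g : G | dist (g • x) x ≤ ε}.ncard ≤ N := by
  classical
  intro ε hε
  obtain ⟨R, N, hR0, hRN⟩ := hacyl (2 * ε + 1) (by positivity)
  set n : ℕ := ⌈R / T⌉₊ with hn
  have hnT : R ≤ (n : ℝ) * T := by
    rw [← div_le_iff₀ hT]
    exact Nat.le_ceil _
  set ρ : ℝ := 2 * ((n : ℝ) + 1) * T + ε with hρ
  obtain ⟨C, hC⟩ := hulc ρ (1 / 2) (by positivity) (by norm_num)
  refine ⟨C * N, fun x => ?_⟩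
  obtain ⟨y, hy1, hy2⟩ := hspace x n
  have hRxy : R ≤ dist x y := le_trans hnT hy1
  obtain ⟨hKfin, hKcard⟩ := hRN x y hRxy
  set K := coarseStab2 G (2 * ε + 1) x y with hK
  obtain ⟨s, hs, hcov⟩ := hC y
  set S := {g : G | dist (g • x) x ≤ ε} with hS
  -- every element of S moves y into the ball of radius ρ around y
  have hmem : ∀ g ∈ S, g • y ∈ closedBall y ρ := by
    intro g hg
    have h4 : dist (g • y) y ≤ dist (g • y) (g • x) + dist (g • x) x + dist x y :=
      dist_triangle4 _ _ _ _
    rw [hiso g y x, dist_comm y x] at h4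
    have : dist (g • y) y ≤ 2 * dist x y + ε := by
      have := hg
      simp only [hS, Set.mem_setOf_eq] at this
      linarith
    rw [mem_closedBall]
    have : dist (g • y) y ≤ 2 * (((n : ℝ) + 1) * T) + ε := by nlinarith
    rw [hρ]; linarith
  -- the fibers over the covering balls
  set f : Y → Set G := fun c => {g ∈ S | g • y ∈ ball c (1 / 2)} with hf
  have hfc : ∀ c ∈ s, (f c).Finite ∧ (f c).ncard ≤ N := by
    intro c _
    rcases Set.eq_empty_or_nonempty (f c) with hemp | ⟨h, hh⟩
    · rw [hemp]; simp
    · -- f c ⊆ h • K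
      have hsub : f c ⊆ (fun k => h * k) '' K := by
        intro g hg
        refine ⟨h⁻¹ * g, ?_, by group⟩
        simp only [hK, coarseStab2, Set.mem_setOf_eq, mul_smul]
        have e1 : dist (h⁻¹ • g • x) x = dist (g • x) (h • x) := by
          have := hiso h (h⁻¹ • g • x) x
          rw [smul_inv_smul] at this; exact this.symm
        have e2 : dist (h⁻¹ • g • y) y = dist (g • y) (h • y) := by
          have := hiso h (h⁻¹ • g • y) y
          rw [smul_inv_smul] at this; exact this.symm
        simp only [hf, hS, Set.mem_setOf_eq, mem_ball] at hg hh
        constructor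
        · rw [e1]
          calc dist (g • x) (h • x) ≤ dist (g • x) x + dist x (h • x) := dist_triangle _ _ _
            _ ≤ ε + ε := add_le_add hg.1 (by rw [dist_comm]; exact hh.1)
            _ ≤ 2 * ε + 1 := by linarith
        · rw [e2]
          calc dist (g • y) (h • y) ≤ dist (g • y) c + dist c (h • y) := dist_triangle _ _ _
            _ ≤ 1 / 2 + 1 / 2 := add_le_add hg.2.le (by rw [dist_comm]; exact hh.2.le)
            _ ≤ 2 * ε + 1 := by linarith
      have hfin : ((fun k => h * k) '' K).Finite := hKfin.image _
      refine ⟨hfin.subset hsub, ?_⟩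
      calc (f c).ncard ≤ ((fun k => h * k) '' K).ncard := Set.ncard_le_ncard hsub hfin
        _ = K.ncard := Set.ncard_image_of_injective _ (mul_right_injective h)
        _ ≤ N := hKcard
  obtain ⟨hUfin, hUcard⟩ := finite_ncard_biUnion s f N hfc
  have hSsub : S ⊆ ⋃ c ∈ s, f c := by
    intro g hg
    obtain ⟨c, hc1, hc2⟩ := Set.mem_iUnion₂.1 (hcov (hmem g hg))
    exact Set.mem_iUnion₂.2 ⟨c, hc1, hg, hc2⟩
  refine ⟨hUfin.subset hSsub, ?_⟩
  calc S.ncard ≤ (⋃ c ∈ s, f c).ncard := Set.ncard_le_ncard hSsub hUfin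
    _ ≤ s.card * N := hUcard
    _ ≤ C * N := Nat.mul_le_mul_right _ hs
end

section
/- Let Y be a metric space, T > 0, λ ≥ 0, M > 0, and let c, q : [0, T] → Y be (1, λ)-quasigeodesics with c(0) = q(0) whose images are at Hausdorff distance at most M (every point of the image of c is within M of the image of q and vice versa). Then for every t ∈ [0, T], d(c(t), q(t)) ≤ 2M + 3λ. -/
open Set Metric

/-- `q` is a `(1, lam)`-quasigeodesic on the interval `I`. -/
def IsQuasigeodesicOn {Y : Type*} [PseudoMetricSpace Y] (lam : ℝ) (I : Set ℝ) (q : ℝ → Y) :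
    Prop :=
  ∀ s ∈ I, ∀ t ∈ I, |s - t| - lam ≤ dist (q s) (q t) ∧ dist (q s) (q t) ≤ |s - t| + lam

/-- Two `(1, λ)`-quasigeodesics on `[0, T]` with the same origin whose
images are at Hausdorff distance at most `M` synchronously fellow travel:
`d(c(t), q(t)) ≤ 2M + 3λ`. -/
theorem quasigeodesics_fellow_travel
    (Y : Type*) [MetricSpace Y] (T lam M : ℝ) (hT : 0 < T) (hlam : 0 ≤ lam) (hM : 0 < M)
    (c q : ℝ → Y)
    (hc : IsQuasigeodesicOn lam (Set.Icc 0 T) c)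
    (hq : IsQuasigeodesicOn lam (Set.Icc 0 T) q)
    (h0 : c 0 = q 0)
    (hcq : ∀ s ∈ Set.Icc (0 : ℝ) T, ∃ t ∈ Set.Icc (0 : ℝ) T, dist (c s) (q t) ≤ M)
    (hqc : ∀ t ∈ Set.Icc (0 : ℝ) T, ∃ s ∈ Set.Icc (0 : ℝ) T, dist (c s) (q t) ≤ M) :
    ∀ t ∈ Set.Icc (0 : ℝ) T, dist (c t) (q t) ≤ 2 * M + 3 * lam := by
  intro t ht
  obtain ⟨s, hs, hd⟩ := hcq t ht
  have h0T : (0 : ℝ) ∈ Set.Icc 0 T := ⟨le_refl 0, hT.le⟩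
  have hc0t := hc 0 h0T t ht
  have hq0s := hq 0 h0T s hs
  have hqst := (hq s hs t ht).2
  have habs_t : |0 - t| = t := by rw [abs_sub_comm]; simpa using abs_of_nonneg ht.1
  have habs_s : |0 - s| = s := by rw [abs_sub_comm]; simpa using abs_of_nonneg hs.1
  rw [habs_t] at hc0t
  rw [habs_s] at hq0s
  -- d(q0, ct) = d(c0, ct)
  have heq : dist (c 0) (c t) = dist (q 0) (c t) := by rw [h0]
  -- upper bound on t - s
  have h1 : t - s ≤ M + 2 * lam := by
    have := dist_triangle (q 0) (q s) (c t)
    have hsc : dist (q s) (c t) = dist (c t) (q s) := dist_comm _ _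
    nlinarith [hc0t.1, hq0s.2, hd]
  have h2 : s - t ≤ M + 2 * lam := by
    have := dist_triangle (q 0) (c t) (q s)
    have hsc : dist (c t) (q s) = dist (c t) (q s) := rfl
    nlinarith [hc0t.2, hq0s.1, hd]
  have habs : |s - t| ≤ M + 2 * lam := abs_sub_le_iff.mpr ⟨h2, h1⟩
  calc dist (c t) (q t) ≤ dist (c t) (q s) + dist (q s) (q t) := dist_triangle _ _ _
    _ ≤ M + (|s - t| + lam) := add_le_add hd hqst
    _ ≤ 2 * M + 3 * lam := by linarith
end
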